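/- arXiv:1901.04773 — 12 statements merged into one kernel-verified Lean document; each statement's English description precedes it below -/
import Mathlib

section
/- Let X be a set and m > d natural numbers. There exists an m→d monotone compression scheme for the finite subsets of X (a pair η, σ with σ(A) ⊆ A ⊆ η(σ(A)) for all m-element sets A) if and only if there exists a finite-to-one function σ from the m-element subsets of X to the d-element subsets of X with σ(A) ⊆ A for every m-element subset A. -/
theorem stmt_1 (X : Type*) (m d : ℕ) (hmd : m > d) :
    (∃ (η : Finset X → Finset X) (σ : Finset X → Finset X),
      ∀ A : Finset X, A.card = m →
        σ A ⊆ A ∧ (σ A).card = d ∧ A ⊆ η (σ A)) ↔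
    (∃ σ : Finset X → Finset X,
      (∀ A : Finset X, A.card = m → σ A ⊆ A ∧ (σ A).card = d) ∧
      ∀ B : Finset X, {A : Finset X | A.card = m ∧ σ A = B}.Finite) := by
  constructor
  · rintro ⟨η, σ, h⟩
    refine ⟨σ, fun A hA => ⟨(h A hA).1, (h A hA).2.1⟩, fun B => ?_⟩
    apply Set.Finite.subset (η B).powerset.finite_toSet
    rintro A ⟨hA, hB⟩
    simpa [Finset.mem_powerset] using hB ▸ (h A hA).2.2
  · rintro ⟨σ, h1, h2⟩
    classical
    refine ⟨fun B => ((h2 B).toFinset).sup id, σ, fun A hA => ⟨(h1 A hA).1, (h1 A hA).2, ?_⟩⟩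
    have : A ∈ (h2 (σ A)).toFinset := by simp [hA]
    exact Finset.le_sup (f := id) this
end

section
/- If X is a set such that X² can be partitioned into sets A₀, A₁ with A₀ finite in the direction of the first axis and A₁ finite in the direction of the second axis, then X is countable. -/
theorem stmt_6 (X : Type*) (A₀ A₁ : Set (X × X))
    (hcover : A₀ ∪ A₁ = Set.univ) (hdisj : Disjoint A₀ A₁)
    (h₀ : ∀ y : X, {x : X | (x, y) ∈ A₀}.Finite)
    (h₁ : ∀ x : X, {y : X | (x, y) ∈ A₁}.Finite) :
    Countable X := by
  by_contra h
  rw [not_countable_iff] at h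
  have hinf : Infinite X := inferInstance
  let f := Infinite.natEmbedding X
  have hT : (⋃ n : ℕ, {y : X | (f n, y) ∈ A₁}).Countable :=
    Set.countable_iUnion fun n => (h₁ (f n)).countable
  have : ¬ (Set.univ : Set X).Countable := (Set.not_countable_univ)
  obtain ⟨y, hy⟩ : ∃ y : X, y ∉ ⋃ n : ℕ, {y : X | (f n, y) ∈ A₁} := by
    by_contra hc
    push_neg at hc
    exact this (hT.mono fun z _ => hc z)
  have hsub : Set.range f ⊆ {x : X | (x, y) ∈ A₀} := by
    rintro x ⟨n, rfl⟩
    have hny : (f n, y) ∉ A₁ := fun hmem => hy (Set.mem_iUnion.mpr ⟨n, hmem⟩)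
    have : (f n, y) ∈ A₀ ∪ A₁ := hcover ▸ Set.mem_univ _
    rcases this with h | h
    · exact h
    · exact absurd h hny
  exact Set.infinite_range_of_injective f.injective ((h₀ y).subset hsub)
end

section
/- The cube ω₁³ can be written as the union of three sets A₀, A₁, A₂ such that for each i < 3, A_i is finite in the direction of the i-th axis: for every choice of values of the two coordinates other than i, the set of i-th coordinates of points of A_i with those other coordinates is finite. -/
/-!
Fix for each `m : ω₁` an injection `e m` of the countable segment `Iic m` into `ℕ`. Put a point
`x` into `A i` when, for a coordinate `p` at which `x` is maximal, `i ≠ p` is a coordinate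
minimising `e (x p) (x j)` over `j ≠ p`; every point lies in some `A i`. Along the `i`-th axis
through a point of `A i`, the coordinate `x p` is fixed and bounds `x i`, and a third fixed
coordinate `x t` bounds the code `e (x p) (x i) ≤ e (x p) (x t)`; injectivity of `e (x p)` on
`Iic (x p)` leaves finitely many choices for `x i`.
-/

open Set

lemma Cardinal.countable_Iic_ord_aleph_one (m : (aleph 1).ord.ToType) : (Iic m).Countable := by
  rw [← Iio_insert]
  refine Countable.insert m (le_aleph0_iff_set_countable.1 (lt_aleph_one_iff.1 ?_))
  simpa using mk_Iio_lt m

section CountableSegments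

variable {α : Type*} [LinearOrder α] (hα : ∀ m : α, (Iic m).Countable)

/-- Injective on `Iic m`; its values outside `Iic m` are arbitrary. -/
noncomputable def segmentCode (m : α) : α → ℕ :=
  (countable_iff_exists_injOn.1 (hα m)).choose

lemma injOn_segmentCode (m : α) : InjOn (segmentCode hα m) (Iic m) :=
  (countable_iff_exists_injOn.1 (hα m)).choose_spec

lemma finite_setOf_le_and_segmentCode_le (m : α) (N : ℕ) :
    {z | z ≤ m ∧ segmentCode hα m z ≤ N}.Finite :=
  Finite.of_finite_image ((finite_Iic N).subset (image_subset_iff.2 fun _ hz ↦ hz.2))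
    ((injOn_segmentCode hα m).mono fun _ hz ↦ hz.1)

variable {ι : Type*}

def axisPiece (i : ι) : Set (ι → α) :=
  {x | ∃ p ≠ i, (∀ k, x k ≤ x p) ∧
    ∀ j ≠ p, segmentCode hα (x p) (x i) ≤ segmentCode hα (x p) (x j)}

lemma iUnion_axisPiece [Finite ι] [Nontrivial ι] :
    ⋃ i, axisPiece hα i = (univ : Set (ι → α)) := by
  refine eq_univ_of_forall fun x ↦ mem_iUnion.2 ?_
  obtain ⟨p, hp⟩ := Finite.exists_max x
  have : Nonempty {j // j ≠ p} := nonempty_subtype.2 (exists_ne p)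
  obtain ⟨⟨i, hip⟩, hi⟩ :=
    Finite.exists_min fun j : {j // j ≠ p} ↦ segmentCode hα (x p) (x j)
  exact ⟨i, p, hip.symm, hp, fun j hj ↦ hi ⟨j, hj⟩⟩

lemma finite_axisPiece_inter_line [Finite ι] (h3 : 3 ≤ ENat.card ι) (i : ι) (x : ι → α) :
    {y ∈ axisPiece hα i | ∀ j ≠ i, y j = x j}.Finite := by
  classical
  choose t htp hti using fun p ↦ ENat.exists_ne_ne_of_three_le h3 p i
  let values :=
    ⋃ p, {z | z ≤ x p ∧ segmentCode hα (x p) z ≤ segmentCode hα (x p) (x (t p))}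
  have hvalues : values.Finite :=
    finite_iUnion fun p ↦ finite_setOf_le_and_segmentCode_le hα (x p) _
  refine (hvalues.image (Function.update x i)).subset ?_
  rintro y ⟨⟨p, hpi, hmax, hmin⟩, hline⟩
  have hyp : y p = x p := hline p hpi
  have hyt : y (t p) = x (t p) := hline (t p) (hti p)
  refine ⟨y i, mem_iUnion.2 ⟨p, hyp ▸ hmax i, ?_⟩, ?_⟩
  · simpa only [hyp, hyt] using hmin (t p) (htp p)
  · funext j
    by_cases hj : j = i
    · subst hj; simp
    · simp [hj, hline j hj]

end CountableSegments

theorem stmt_7 :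
    ∃ A : Fin 3 → Set (Fin 3 → (Cardinal.aleph 1).ord.ToType),
      (⋃ i, A i) = Set.univ ∧
      ∀ (i : Fin 3) (x : Fin 3 → (Cardinal.aleph 1).ord.ToType),
        {y ∈ A i | ∀ j ≠ i, y j = x j}.Finite :=
  ⟨axisPiece Cardinal.countable_Iic_ord_aleph_one,
    iUnion_axisPiece _,
    finite_axisPiece_inter_line _ (by simp)⟩
end

section
/- For every natural number k, the power ω_k^{k+2} can be written as the union of k+2 sets A₀,...,A_{k+1} such that for every i < k+2, A_i is finite in the direction of the i-th axis: for every point x ∈ ω_k^{k+2}, the set of points y ∈ A_i with y_j = x_j for all j ≠ i is finite. -/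
/-!
Induction on `k`, following Kuratowski. For `ω = ω₀`, put `(a, b)` into the first set when
`a ≤ b` and into the second when `b ≤ a`: fixing one coordinate bounds the other by a natural
number. For the step from `ω_k` to `ω_{k+1}`, look at a point `y` of `ω_{k+1}^{k+3}` through a
largest coordinate `y j`. All coordinates of `y` lie in the initial segment `[0, y j]`, which has
cardinality at most `ℵ_k` and so embeds into `ω_k`; the other `k + 2` coordinates, read in `ω_k`
through that embedding, lie in some set `B m` of the decomposition of `ω_k^{k+2}`, and `y` goes
into the set of the corresponding axis. Along the `i`-th axis, for each position `j ≠ i` of the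
maximum the value `y j` and hence the embedding are fixed, so finiteness of `B m` along `m`
transfers to `y`.
-/

open Set

section

variable {ι X Y : Type*}

def IsFiniteAlong (i : ι) (A : Set (ι → X)) : Prop :=
  ∀ x : ι → X, {y ∈ A | ∀ j ≠ i, y j = x j}.Finite

def HasKuratowskiDecomposition (ι X : Type*) : Prop :=
  ∃ A : ι → Set (ι → X), ⋃ i, A i = Set.univ ∧ ∀ i, IsFiniteAlong i (A i)

theorem Set.Finite.of_finite_image_eval {i : ι} {x : ι → X} {S : Set (ι → X)}
    (hS : ∀ y ∈ S, ∀ j ≠ i, y j = x j) (h : ((fun y => y i) '' S).Finite) : S.Finite :=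
  h.of_finite_image fun y hy y' hy' hyy' => funext fun j => by
    by_cases hj : j = i
    · exact hj ▸ hyy'
    · exact (hS y hy j hj).trans (hS y' hy' j hj).symm

theorem hasKuratowskiDecomposition_fin_two [LinearOrder X] (hX : ∀ a : X, (Iic a).Finite) :
    HasKuratowskiDecomposition (Fin 2) X := by
  refine ⟨![{z | z 0 ≤ z 1}, {z | z 1 ≤ z 0}], ?_, ?_⟩
  · refine eq_univ_of_forall fun z => mem_iUnion.2 ?_
    rcases le_total (z 0) (z 1) with h | h
    exacts [⟨0, h⟩, ⟨1, h⟩]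
  · intro i x
    refine Finite.of_finite_image_eval (fun y hy => hy.2) ((hX (x (i.rev))).subset ?_)
    rintro _ ⟨y, ⟨hy, hyx⟩, rfl⟩
    fin_cases i
    · exact (hyx 1 (by decide)) ▸ hy
    · exact (hyx 0 (by decide)) ▸ hy

theorem HasKuratowskiDecomposition.fin_succ [LinearOrder X] {n : ℕ}
    (hY : HasKuratowskiDecomposition (Fin (n + 1)) Y)
    (hXY : ∀ a : X, ∃ f : X → Y, InjOn f (Iic a)) :
    HasKuratowskiDecomposition (Fin (n + 2)) X := by
  obtain ⟨B, hBcover, hBfin⟩ := hY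
  choose f hf using hXY
  choose top htop using fun y : Fin (n + 2) → X => Finite.exists_max y
  let rest (y : Fin (n + 2) → X) : Fin (n + 1) → Y := f (y (top y)) ∘ y ∘ (top y).succAbove
  refine ⟨fun i => {y | ∃ m, (top y).succAbove m = i ∧ rest y ∈ B m}, ?_, fun i x => ?_⟩
  · refine eq_univ_of_forall fun y => mem_iUnion.2 ?_
    obtain ⟨m, hm⟩ := mem_iUnion.1 (hBcover ▸ mem_univ (rest y))
    exact ⟨_, m, rfl, hm⟩
  set S := {y ∈ {y | ∃ m, (top y).succAbove m = i ∧ rest y ∈ B m} | ∀ j ≠ i, y j = x j}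
  suffices ∀ j, {y ∈ S | top y = j}.Finite from
    (finite_iUnion this).subset fun y hy => mem_iUnion.2 ⟨top y, hy, rfl⟩
  intro j
  rcases eq_or_ne j i with rfl | hji
  · refine finite_empty.subset fun y ⟨⟨⟨m, hm, _⟩, _⟩, hy⟩ => ?_
    exact Fin.succAbove_ne _ m (hy ▸ hm)
  obtain ⟨m₀, rfl⟩ := Fin.exists_succAbove_eq hji.symm
  have hfiber : ∀ y ∈ {y ∈ S | top y = j}, y (j.succAbove m₀) ∈ Iic (x j) ∧
      f (x j) (y (j.succAbove m₀)) ∈ (fun z => z m₀) ''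
        {z ∈ B m₀ | ∀ m ≠ m₀, z m = (f (x j) ∘ x ∘ j.succAbove) m} := by
    rintro y ⟨⟨⟨m, hm, hyB⟩, hyx⟩, rfl⟩
    obtain rfl := Fin.succAbove_right_injective hm
    have hyj : y (top y) = x (top y) := hyx _ (Fin.succAbove_ne _ _).symm
    refine ⟨hyj ▸ htop y _, rest y, ⟨hyB, ?_⟩, by simp [rest, hyj]⟩
    intro m' hm'
    simp only [rest, Function.comp_apply, hyj,
      hyx _ (Fin.succAbove_right_injective.ne hm')]
  refine Finite.of_finite_image_eval (fun y hy => hy.1.2)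
    (Finite.of_finite_image (f := f (x j)) ?_ ((hf (x j)).mono ?_))
  · refine ((hBfin m₀ (f (x j) ∘ x ∘ j.succAbove)).image fun z => z m₀).subset ?_
    rintro _ ⟨_, ⟨y, hy, rfl⟩, rfl⟩
    exact (hfiber y hy).2
  · rintro _ ⟨y, hy, rfl⟩
    exact (hfiber y hy).1

end

open Cardinal in
theorem hasKuratowskiDecomposition_aleph (k : ℕ) :
    HasKuratowskiDecomposition (Fin (k + 2)) (ℵ_ k).ord.ToType := by
  induction k with
  | zero =>
    refine hasKuratowskiDecomposition_fin_two fun a => lt_aleph0_iff_set_finite.1 ?_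
    simpa using mk_Iic_lt a (by simp) (by simp)
  | succ k ih =>
    refine ih.fin_succ fun a => ?_
    have hle : #(Iic a) ≤ #(ℵ_ k).ord.ToType := by
      rw [mk_toType, card_ord, ← Order.lt_succ_iff, succ_aleph, ← Nat.cast_succ]
      simpa using mk_Iic_lt a (by simp) (by simp)
    obtain ⟨e⟩ := hle
    have : Nonempty (ℵ_ k).ord.ToType := ⟨e ⟨a, self_mem_Iic⟩⟩
    exact exists_injOn_iff_injective.2 ⟨e, e.injective⟩

theorem stmt_8 (k : ℕ) :
    ∃ A : Fin (k + 2) → Set (Fin (k + 2) → (Cardinal.aleph k).ord.ToType),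
      (⋃ i, A i) = Set.univ ∧
      ∀ (i : Fin (k + 2)) (x : Fin (k + 2) → (Cardinal.aleph k).ord.ToType),
        {y ∈ A i | ∀ j ≠ i, y j = x j}.Finite :=
  hasKuratowskiDecomposition_aleph k
end

section
/- Let k ∈ ℕ and suppose ω_k^{k+2} is the union of disjoint sets A₀,...,A_{k+1} with A_i finite in the direction of the i-th axis. Then the map σ from (k+2)-element subsets of ω_k to (k+1)-element subsets, defined by σ(x) = x \ {x_i} where x (in increasing enumeration) lies in A_i, is finite-to-one and satisfies σ(x) ⊆ x; hence there is a (k+2)→(k+1) monotone compression scheme for the finite subsets of ω_k. -/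
/-!
The increasing enumeration of each `(n+2)`-set `s` lies in some `A i`, chosen as the index of
`s`, and `σ` deletes the `i`-th element. A fibre of `σ` over an `(n+1)`-set `B` is then covered
by finitely many axis-parallel lines: deleting the `i`-th coordinate of the enumeration of `s`
yields the enumeration of `B`, so the enumerations of all `s` with `σ s = B` and selected index
`i` lie on one line parallel to the `i`-th axis, which meets `A i` in a finite set.
-/

open Finset

def FiniteAlongAxis {ι α : Type*} (S : Set (ι → α)) (i : ι) : Prop :=
  ∀ x : ι → α, {y ∈ S | ∀ j ≠ i, y j = x j}.Finite

theorem FiniteAlongAxis.finite_comp_succAbove_eq {α : Type*} {n : ℕ}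
    {S : Set (Fin (n + 1) → α)} {i : Fin (n + 1)} (hS : FiniteAlongAxis S i)
    (g : Fin n → α) : {y ∈ S | y ∘ i.succAbove = g}.Finite := by
  rcases Set.eq_empty_or_nonempty {y ∈ S | y ∘ i.succAbove = g} with
    hempty | ⟨y₀, -, hy₀⟩
  · simp [hempty]
  refine (hS y₀).subset fun y ⟨hyS, hy⟩ => ⟨hyS, fun j hj => ?_⟩
  obtain ⟨l, rfl⟩ := Fin.exists_succAbove_eq hj
  exact (congrFun hy l).trans (congrFun hy₀ l).symm

section Compression

variable {α : Type*} [LinearOrder α] {n : ℕ}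

theorem Finset.orderEmbOfFin_comp_succAbove {s : Finset α} (hs : s.card = n + 1)
    (i : Fin (n + 1)) (h : (s.erase (s.orderEmbOfFin hs i)).card = n) :
    s.orderEmbOfFin hs ∘ i.succAbove = (s.erase (s.orderEmbOfFin hs i)).orderEmbOfFin h := by
  refine orderEmbOfFin_unique h (fun l => mem_erase.mpr ⟨?_, orderEmbOfFin_mem s hs _⟩)
    ((s.orderEmbOfFin hs).strictMono.comp (Fin.strictMono_succAbove i))
  exact (s.orderEmbOfFin hs).injective.ne (Fin.succAbove_ne i l)

noncomputable def eraseAtIndex (idx : ∀ s : Finset α, s.card = n + 1 → Fin (n + 1))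
    (s : Finset α) : Finset α :=
  if hs : s.card = n + 1 then s.erase (s.orderEmbOfFin hs (idx s hs)) else ∅

variable (idx : ∀ s : Finset α, s.card = n + 1 → Fin (n + 1))

theorem eraseAtIndex_of_card_eq {s : Finset α} (hs : s.card = n + 1) :
    eraseAtIndex idx s = s.erase (s.orderEmbOfFin hs (idx s hs)) :=
  dif_pos hs

theorem eraseAtIndex_subset (s : Finset α) : eraseAtIndex idx s ⊆ s := by
  unfold eraseAtIndex
  split_ifs
  exacts [erase_subset _ _, empty_subset _]

theorem card_eraseAtIndex {s : Finset α} (hs : s.card = n + 1) :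
    (eraseAtIndex idx s).card = n := by
  rw [eraseAtIndex_of_card_eq idx hs, card_erase_of_mem (orderEmbOfFin_mem s hs _), hs,
    Nat.add_sub_cancel]

theorem finite_eraseAtIndex_fiber {A : Fin (n + 1) → Set (Fin (n + 1) → α)}
    (hA : ∀ i, FiniteAlongAxis (A i) i)
    (hidx : ∀ s hs, ⇑(s.orderEmbOfFin hs) ∈ A (idx s hs)) (B : Finset α) :
    {s : Finset α | s.card = n + 1 ∧ eraseAtIndex idx s = B}.Finite := by
  by_cases hB : B.card = n
  · refine (Set.finite_iUnion fun i => ((hA i).finite_comp_succAbove_eq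
      (B.orderEmbOfFin hB)).image fun y => insert (y i) B).subset ?_
    rintro s ⟨hs, rfl⟩
    have hmem := orderEmbOfFin_mem s hs (idx s hs)
    refine Set.mem_iUnion.mpr ⟨idx s hs, s.orderEmbOfFin hs, ⟨hidx s hs, ?_⟩, ?_⟩
    · simp only [eraseAtIndex_of_card_eq idx hs]
      exact orderEmbOfFin_comp_succAbove hs _ _
    · simp only [eraseAtIndex_of_card_eq idx hs, insert_erase hmem]
  · refine Set.Finite.subset Set.finite_empty fun s ⟨hs, hsB⟩ => hB ?_
    rw [← hsB, card_eraseAtIndex idx hs]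

end Compression

theorem stmt_9_general (k : ℕ)
    (A : Fin (k + 2) → Set (Fin (k + 2) → (Cardinal.aleph k).ord.ToType))
    (hcover : (⋃ i, A i) = Set.univ)
    (hfin : ∀ (i : Fin (k + 2)) (x : Fin (k + 2) → (Cardinal.aleph k).ord.ToType),
      {y ∈ A i | ∀ j ≠ i, y j = x j}.Finite) :
    ∃ σ : Finset (Cardinal.aleph k).ord.ToType → Finset (Cardinal.aleph k).ord.ToType,
      (∀ (s : Finset (Cardinal.aleph k).ord.ToType) (hs : s.card = k + 2),
        ∃ i : Fin (k + 2),
          (fun j => ((s.orderIsoOfFin hs) j : (Cardinal.aleph k).ord.ToType)) ∈ A i ∧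
          σ s = s.erase ((s.orderIsoOfFin hs) i : (Cardinal.aleph k).ord.ToType)) ∧
      (∀ s : Finset (Cardinal.aleph k).ord.ToType, s.card = k + 2 →
        σ s ⊆ s ∧ (σ s).card = k + 1) ∧
      ∀ B : Finset (Cardinal.aleph k).ord.ToType,
        {s : Finset (Cardinal.aleph k).ord.ToType | s.card = k + 2 ∧ σ s = B}.Finite := by
  have hex (s : Finset (Cardinal.aleph k).ord.ToType) (hs : s.card = k + 2) :
      ∃ i, ⇑(s.orderEmbOfFin hs) ∈ A i :=
    Set.mem_iUnion.mp (hcover ▸ Set.mem_univ _)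
  choose idx hidx using hex
  exact ⟨eraseAtIndex idx, fun s hs => ⟨idx s hs, hidx s hs, eraseAtIndex_of_card_eq idx hs⟩,
    fun s hs => ⟨eraseAtIndex_subset idx s, card_eraseAtIndex idx hs⟩,
    finite_eraseAtIndex_fiber idx hfin hidx⟩

theorem stmt_9 (k : ℕ)
    (A : Fin (k + 2) → Set (Fin (k + 2) → (Cardinal.aleph k).ord.ToType))
    (hcover : (⋃ i, A i) = Set.univ)
    (hdisj : Pairwise fun i j => Disjoint (A i) (A j))
    (hfin : ∀ (i : Fin (k + 2)) (x : Fin (k + 2) → (Cardinal.aleph k).ord.ToType),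
      {y ∈ A i | ∀ j ≠ i, y j = x j}.Finite) :
    ∃ σ : Finset (Cardinal.aleph k).ord.ToType → Finset (Cardinal.aleph k).ord.ToType,
      (∀ (s : Finset (Cardinal.aleph k).ord.ToType) (hs : s.card = k + 2),
        ∃ i : Fin (k + 2),
          (fun j => ((s.orderIsoOfFin hs) j : (Cardinal.aleph k).ord.ToType)) ∈ A i ∧
          σ s = s.erase ((s.orderIsoOfFin hs) i : (Cardinal.aleph k).ord.ToType)) ∧
      (∀ s : Finset (Cardinal.aleph k).ord.ToType, s.card = k + 2 →
        σ s ⊆ s ∧ (σ s).card = k + 1) ∧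
      ∀ B : Finset (Cardinal.aleph k).ord.ToType,
        {s : Finset (Cardinal.aleph k).ord.ToType | s.card = k + 2 ∧ σ s = B}.Finite :=
  stmt_9_general k A hcover hfin
end

section
/- Let k, l, m be natural numbers with m > l, and suppose σ : [ω_{k+1}]^{m+1} → [ω_{k+1}]^{l+1} is finite-to-one with σ(x) ⊆ x for all x. Then there is an ordinal δ < ω_{k+1} with δ ≥ ω_k (of cofinality ω) such that every (m+1)-element subset x of ω_{k+1} with σ(x) ⊆ δ satisfies x ⊆ δ. -/
/-!
For infinite `β < ω_{k+1}`, only `|β|` many finite sets lie below `β`, so, `σ` being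
finite-to-one, the sets `s` with `σ s ⊆ β` have a union of size `≤ |β| < ω_{k+1}`; by regularity
of `ω_{k+1}` it is bounded by some `γ < ω_{k+1}`. Iterating this step from `δ₀ = ω_k` gives
`δ₀ < δ₁ < ⋯` with `σ s ⊆ δₙ → s ⊆ δₙ₊₁`. Their supremum `δ` has cofinality `ω`, stays below
`ω_{k+1}`, and any finite `σ s ⊆ δ` already lies below some `δₙ`.
-/

open Cardinal Set Ordinal

universe u

namespace Cardinal

variable {α : Type*}

theorem mk_setOf_finset_subset_le {A : Set α} (hA : A.Infinite) :
    #{B : Finset α | (B : Set α) ⊆ A} ≤ #A := by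
  classical
  have : Infinite A := hA.to_subtype
  let embed : Finset A → {B : Finset α | (B : Set α) ⊆ A} :=
    fun t ↦ ⟨t.map (Function.Embedding.subtype _), by simp⟩
  have hsurj : Function.Surjective embed := fun B ↦
    ⟨B.1.subtype (· ∈ A), Subtype.ext (Finset.subtype_map_of_mem fun _ hx ↦ B.2 hx)⟩
  exact (mk_le_of_surjective hsurj).trans (mk_finset_of_infinite A).le

theorem mk_biUnion_finset_le (T : Set (Finset α)) :
    #(⋃ s ∈ T, (s : Set α)) ≤ #T * ℵ₀ :=
  (mk_biUnion_le _ T).trans <| mul_le_mul_right (ciSup_le' fun s ↦ s.1.finite_toSet.lt_aleph0.le) _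

theorem mk_biUnion_le_of_finite_fibers {D : Set (Finset α)} {σ : Finset α → Finset α}
    (hfin : ∀ B, {s ∈ D | σ s = B}.Finite) {A : Set α} (hA : A.Infinite) :
    #(⋃ s ∈ {s ∈ D | (σ s : Set α) ⊆ A}, (s : Set α)) ≤ #A := by
  have hA₀ : ℵ₀ ≤ #A := infinite_iff.1 hA.to_subtype
  let value : {s ∈ D | (σ s : Set α) ⊆ A} → {B : Finset α | (B : Set α) ⊆ A} :=
    fun s ↦ ⟨σ s, s.2.2⟩
  have hfiber (B) : #(value ⁻¹' {B}) ≤ ℵ₀ := by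
    refine (Finite.lt_aleph0 ?_).le
    refine Finite.of_finite_image ((hfin B.1).subset ?_) Subtype.val_injective.injOn
    rintro _ ⟨s, hs, rfl⟩
    exact ⟨s.2.1, congrArg Subtype.val hs⟩
  calc #(⋃ s ∈ {s ∈ D | (σ s : Set α) ⊆ A}, (s : Set α))
      ≤ #{s ∈ D | (σ s : Set α) ⊆ A} * ℵ₀ := mk_biUnion_finset_le _
    _ ≤ #{B : Finset α | (B : Set α) ⊆ A} * ℵ₀ * ℵ₀ := by
        gcongr; exact mk_le_mk_mul_of_mk_preimage_le value hfiber
    _ ≤ #A * ℵ₀ * ℵ₀ := by gcongr; exact mk_setOf_finset_subset_le hA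
    _ = #A := by rw [mul_aleph0_eq hA₀, mul_aleph0_eq hA₀]

theorem IsRegular.exists_bound_of_finite_fibers {κ : Cardinal.{u}} (hκ : κ.IsRegular)
    {D : Set (Finset Ordinal.{u})} (hD : ∀ s ∈ D, (s : Set Ordinal) ⊆ Iio κ.ord)
    {σ : Finset Ordinal.{u} → Finset Ordinal.{u}} (hfin : ∀ B, {s ∈ D | σ s = B}.Finite)
    {β : Ordinal.{u}} (hωβ : ω ≤ β) (hβ : β < κ.ord) :
    ∃ γ, β < γ ∧ γ < κ.ord ∧
      ∀ s ∈ D, (σ s : Set Ordinal) ⊆ Iio β → (s : Set Ordinal) ⊆ Iio γ := by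
  set U := ⋃ s ∈ {s ∈ D | (σ s : Set Ordinal) ⊆ Iio β}, (s : Set Ordinal)
  have hUκ : U ⊆ Iio κ.ord := iUnion₂_subset fun s hs ↦ hD s hs.1
  have hβ_inf : (Iio β).Infinite := infinite_of_injective_forall_mem Nat.cast_injective
    fun n ↦ (natCast_lt_omega0 n).trans_le hωβ
  have hU_card : #U < (Ordinal.lift.{u + 1} κ.ord).cof := by
    rw [← Ordinal.lift_cof, hκ.cof_ord]
    calc #U ≤ #(Iio β) := mk_biUnion_le_of_finite_fibers hfin hβ_inf
      _ = Cardinal.lift β.card := mk_Iio_ordinal β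
      _ < Cardinal.lift κ := lift_lt.2 (lt_ord.1 hβ)
  have hsup : sSup U < κ.ord := Ordinal.sSup_lt_of_lt_cof hU_card hUκ
  have hlim : Order.IsSuccLimit κ.ord := isSuccLimit_ord hκ.aleph0_le
  refine ⟨max β (sSup U) + 1, ?_, hlim.add_one_lt (max_lt hβ hsup), ?_⟩
  · exact (le_max_left _ _).trans_lt (Order.lt_add_one_iff.2 le_rfl)
  · intro s hs hσs x hx
    have hxU : x ∈ U := mem_biUnion ⟨hs, hσs⟩ hx
    exact Order.lt_add_one_iff.2 ((le_csSup ⟨κ.ord, fun y hy ↦ (hUκ hy).le⟩ hxU).trans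
      (le_max_right _ _))

end Cardinal

theorem exists_strictMono_nat_of_forall_exists_gt {α : Type*} [Preorder α] {p : α → Prop}
    {R : α → α → Prop} (step : ∀ a, p a → ∃ b, a < b ∧ p b ∧ R a b) {a₀ : α} (h₀ : p a₀) :
    ∃ d : ℕ → α, d 0 = a₀ ∧ StrictMono d ∧ ∀ n, p (d n) ∧ R (d n) (d (n + 1)) := by
  choose! next hnext using step
  have hp (n : ℕ) : p (next^[n] a₀) := by
    induction n with
    | zero => exact h₀
    | succ n ih => simpa only [Function.iterate_succ_apply'] using (hnext _ ih).2.1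
  refine ⟨fun n ↦ next^[n] a₀, rfl, strictMono_nat_of_lt_succ fun n ↦ ?_, fun n ↦ ⟨hp n, ?_⟩⟩
  · simpa only [Function.iterate_succ_apply'] using (hnext _ (hp n)).1
  · simpa only [Function.iterate_succ_apply'] using (hnext _ (hp n)).2.2

namespace Ordinal

theorem exists_finset_subset_Iio_of_subset_Iio_iSup {d : ℕ → Ordinal.{u}} (hd : Monotone d)
    (F : Finset Ordinal.{u}) (hF : (F : Set Ordinal) ⊆ Iio (⨆ n, d n)) :
    ∃ n, (F : Set Ordinal) ⊆ Iio (d n) := by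
  have hev : ∀ᶠ n in Filter.atTop, ∀ x ∈ F, x < d n := by
    refine (Filter.eventually_all_finset F).2 fun x hx ↦ ?_
    obtain ⟨n₀, hn₀⟩ := Ordinal.lt_iSup_iff.1 (hF hx)
    exact Filter.eventually_atTop.2 ⟨n₀, fun n hn ↦ hn₀.trans_le (hd hn)⟩
  exact hev.exists

theorem cof_iSup_nat {d : ℕ → Ordinal.{u}} (hd : StrictMono d) : (⨆ n, d n).cof = ℵ₀ := by
  rw [← Cardinal.lift_inj.{u, 0}, lift_cof_iSup hd]
  simp

theorem iSup_nat_lt_of_aleph0_lt_cof {d : ℕ → Ordinal.{u}} {a : Ordinal.{u}} (ha : ℵ₀ < a.cof)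
    (hd : ∀ n, d n < a) : ⨆ n, d n < a :=
  lift_iSup_lt_of_lt_cof (by simpa using ha) hd

end Ordinal

theorem stmt_10_general (k m : ℕ)
    (σ : Finset Ordinal → Finset Ordinal)
    (hfin : ∀ B : Finset Ordinal,
      {s : Finset Ordinal | s.card = m + 1 ∧
        (s : Set Ordinal) ⊆ Set.Iio (Cardinal.aleph (k + 1)).ord ∧ σ s = B}.Finite) :
    ∃ δ : Ordinal, (Cardinal.aleph k).ord ≤ δ ∧ δ < (Cardinal.aleph (k + 1)).ord ∧
      δ.cof = Cardinal.aleph0 ∧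
      ∀ s : Finset Ordinal, s.card = m + 1 →
        (s : Set Ordinal) ⊆ Set.Iio (Cardinal.aleph (k + 1)).ord →
        (σ s : Set Ordinal) ⊆ Set.Iio δ → (s : Set Ordinal) ⊆ Set.Iio δ := by
  set Λ := (aleph (k + 1)).ord
  set D := {s : Finset Ordinal | s.card = m + 1 ∧ (s : Set Ordinal) ⊆ Iio Λ}
  have hκ := isRegular_aleph_add_one k
  have hfin' (B) : {s ∈ D | σ s = B}.Finite :=
    (hfin B).subset fun _ ⟨⟨hcard, hsub⟩, hB⟩ ↦ ⟨hcard, hsub, hB⟩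
  have hωk : ω ≤ (aleph k).ord := omega0_le_ord.2 (aleph0_le_aleph k)
  have hkΛ : (aleph k).ord < Λ := ord_lt_ord.2 (aleph_lt_aleph.2 (lt_add_one _))
  have step (β) : ω ≤ β ∧ β < Λ → ∃ γ, β < γ ∧ (ω ≤ γ ∧ γ < Λ) ∧
      ∀ s ∈ D, (σ s : Set Ordinal) ⊆ Iio β → (s : Set Ordinal) ⊆ Iio γ := by
    rintro ⟨hωβ, hβΛ⟩
    obtain ⟨γ, hβγ, hγΛ, hγ⟩ := hκ.exists_bound_of_finite_fibers (fun _ hs ↦ hs.2) hfin' hωβ hβΛ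
    exact ⟨γ, hβγ, ⟨hωβ.trans hβγ.le, hγΛ⟩, hγ⟩
  obtain ⟨d, hd₀, hd, hd_step⟩ := exists_strictMono_nat_of_forall_exists_gt step ⟨hωk, hkΛ⟩
  have hle (n) : d n ≤ ⨆ n, d n := Ordinal.le_iSup d n
  refine ⟨⨆ n, d n, hd₀ ▸ hle 0, ?_, cof_iSup_nat hd, fun s hcard hsub hσs ↦ ?_⟩
  · refine iSup_nat_lt_of_aleph0_lt_cof ?_ fun n ↦ (hd_step n).1.2
    rw [hκ.cof_ord]
    exact aleph0_lt_aleph.2 (by positivity)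
  · obtain ⟨n, hn⟩ := exists_finset_subset_Iio_of_subset_Iio_iSup hd.monotone _ hσs
    exact ((hd_step n).2 s ⟨hcard, hsub⟩ hn).trans (Iio_subset_Iio (hle (n + 1)))

theorem stmt_10 (k l m : ℕ) (hml : m > l)
    (σ : Finset Ordinal → Finset Ordinal)
    (hσ : ∀ s : Finset Ordinal, s.card = m + 1 →
      (s : Set Ordinal) ⊆ Set.Iio (Cardinal.aleph (k + 1)).ord →
      σ s ⊆ s ∧ (σ s).card = l + 1)
    (hfin : ∀ B : Finset Ordinal,
      {s : Finset Ordinal | s.card = m + 1 ∧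
        (s : Set Ordinal) ⊆ Set.Iio (Cardinal.aleph (k + 1)).ord ∧ σ s = B}.Finite) :
    ∃ δ : Ordinal, (Cardinal.aleph k).ord ≤ δ ∧ δ < (Cardinal.aleph (k + 1)).ord ∧
      δ.cof = Cardinal.aleph0 ∧
      ∀ s : Finset Ordinal, s.card = m + 1 →
        (s : Set Ordinal) ⊆ Set.Iio (Cardinal.aleph (k + 1)).ord →
        (σ s : Set Ordinal) ⊆ Set.Iio δ → (s : Set Ordinal) ⊆ Set.Iio δ :=
  stmt_10_general k m σ hfin
end

section
/- Let k, l, m be natural numbers with m > l. If there is a finite-to-one map σ : [ω_{k+1}]^{m+1} → [ω_{k+1}]^{l+1} with σ(x) ⊆ x for all x, then there is a set Y of cardinality ℵ_k and a finite-to-one map ς : [Y]^m → [Y]^l with ς(x) ⊆ x for all x. In other words, an (m+1)→(l+1) monotone compression scheme on a set of size ℵ_{k+1} yields an m→l monotone compression scheme on a set of size ℵ_k. -/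
/-!
Put `α = ω_k < β = ω_(k+1)`. Some `δ ∈ [α, β)` lies in `σ (insert δ x)` for every `x ∈ [α]^m`:
otherwise pick for each `δ` a witness `x_δ`, so that `σ (insert δ x_δ) ⊆ α`. There are only `ℵ_k`
finite subsets of `α`, so infinitely many of the `ℵ_(k+1)` pairwise distinct sets `insert δ x_δ`
have the same image under `σ`, contradicting finiteness of the fibres. For such a `δ`,
`ς x = σ (insert δ x) \ {δ}` is an `m → l` scheme on `α`. Hypothesis and conclusion speak about
ordinals of independent universes, so the scheme is finally pulled back along a bijection between
the two copies of `ω_k`.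
-/

open Cardinal Set

universe u v

section

variable {X : Type u} {m l : ℕ}

/-- `ς` encodes a finite-to-one map `[Y]^m → [Y]^l` with `ς x ⊆ x`; its values off `[Y]^m`
are irrelevant. -/
def IsMonotoneCompression (Y : Set X) (m l : ℕ) (ς : Finset X → Finset X) : Prop :=
  (∀ s : Finset X, s.card = m → (s : Set X) ⊆ Y → ς s ⊆ s ∧ (ς s).card = l) ∧
    ∀ B : Finset X, {s : Finset X | s.card = m ∧ (s : Set X) ⊆ Y ∧ ς s = B}.Finite

namespace IsMonotoneCompression

variable {Y Z : Set X} {σ : Finset X → Finset X}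

theorem mono (h : IsMonotoneCompression Z m l σ) (hYZ : Y ⊆ Z) :
    IsMonotoneCompression Y m l σ :=
  ⟨fun s hs hsY => h.1 s hs (hsY.trans hYZ),
    fun B => (h.2 B).subset fun _ ⟨hs, hsY, hσ⟩ => ⟨hs, hsY.trans hYZ, hσ⟩⟩

theorem erase_insert [DecidableEq X] {δ : X} (hδ : δ ∉ Y)
    (h : IsMonotoneCompression (insert δ Y) (m + 1) (l + 1) σ)
    (hmem : ∀ s : Finset X, s.card = m → (s : Set X) ⊆ Y → δ ∈ σ (insert δ s)) :
    IsMonotoneCompression Y m l fun s => (σ (insert δ s)).erase δ := by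
  have hδs : ∀ s : Finset X, (s : Set X) ⊆ Y → δ ∉ s := fun s hsY hδs => hδ (hsY hδs)
  have hins : ∀ s : Finset X, s.card = m → (s : Set X) ⊆ Y →
      (insert δ s).card = m + 1 ∧ ((insert δ s : Finset X) : Set X) ⊆ insert δ Y :=
    fun s hs hsY => ⟨by rw [Finset.card_insert_of_notMem (hδs s hsY), hs], by
      rw [Finset.coe_insert]; exact insert_subset_insert hsY⟩
  refine ⟨fun s hs hsY => ?_, fun B => ?_⟩
  · obtain ⟨hsub, hcard⟩ := h.1 _ (hins s hs hsY).1 (hins s hs hsY).2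
    exact ⟨Finset.subset_insert_iff.1 hsub, by rw [Finset.card_erase_of_mem (hmem s hs hsY), hcard,
      Nat.add_sub_cancel]⟩
  · refine Finite.of_injOn (f := insert δ) (fun s ⟨hs, hsY, hσ⟩ => ?_)
      (fun s ⟨_, hsY, _⟩ t ⟨_, htY, _⟩ hst => ?_) (h.2 (insert δ B))
    · refine ⟨(hins s hs hsY).1, (hins s hs hsY).2, ?_⟩
      rw [← hσ, Finset.insert_erase (hmem s hs hsY)]
    · simpa [Finset.erase_insert (hδs s hsY), Finset.erase_insert (hδs t htY)] using
        congrArg (Finset.erase · δ) hst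

theorem exists_forall_mem_insert [DecidableEq X] {A : Set X} (hA : A.Infinite) (hAZ : A ⊆ Z)
    (hlt : #A < #↥(Z \ A)) (h : IsMonotoneCompression Z (m + 1) l σ) :
    ∃ δ ∈ Z \ A, ∀ s : Finset X, s.card = m → (s : Set X) ⊆ A → δ ∈ σ (insert δ s) := by
  classical
  by_contra! hcon
  choose x hxcard hxA hxσ using fun δ : ↥(Z \ A) => hcon δ δ.2
  let t : ↥(Z \ A) → Finset X := fun δ => insert (δ : X) (x δ)
  have hnotMem : ∀ δ δ' : ↥(Z \ A), (δ : X) ∉ x δ' := fun δ δ' hδ => δ.2.2 (hxA δ' hδ)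
  have ht : ∀ δ, (t δ).card = m + 1 ∧ ((t δ : Finset X) : Set X) ⊆ Z := fun δ =>
    ⟨by rw [Finset.card_insert_of_notMem (hnotMem δ δ), hxcard],
      by rw [Finset.coe_insert]; exact insert_subset δ.2.1 ((hxA δ).trans hAZ)⟩
  have ht_inj : Function.Injective t := fun δ δ' hδδ' => by
    have hδ : (δ : X) ∈ t δ' := hδδ' ▸ Finset.mem_insert_self _ _
    rcases Finset.mem_insert.1 hδ with hδ | hδ
    · exact Subtype.ext hδ
    · exact absurd hδ (hnotMem δ δ')
  have hσA : ∀ δ, ∀ a ∈ σ (t δ), a ∈ A := fun δ a ha => by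
    have hsub : (σ (t δ)).erase δ ⊆ x δ := Finset.subset_insert_iff.1 (h.1 _ (ht δ).1 (ht δ).2).1
    rw [Finset.erase_eq_of_notMem (hxσ δ)] at hsub
    exact hxA δ (hsub ha)
  let F : ↥(Z \ A) → Finset A := fun δ => (σ (t δ)).subtype (· ∈ A)
  have hF : ∀ δ, (F δ).map (Function.Embedding.subtype _) = σ (t δ) := fun δ =>
    Finset.subtype_map_of_mem (hσA δ)
  have := hA.to_subtype
  obtain ⟨B, hB⟩ := exists_infinite_fiber' F (by rwa [mk_finset_of_infinite])
  have hmaps : MapsTo t (F ⁻¹' {B}) {s | s.card = m + 1 ∧ (s : Set X) ⊆ Z ∧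
      σ s = B.map (Function.Embedding.subtype _)} := fun δ hδ =>
    ⟨(ht δ).1, (ht δ).2, by rw [← hF δ, show F δ = B from hδ]⟩
  exact infinite_coe_iff.1 hB (Finite.of_injOn hmaps ht_inj.injOn (h.2 _))

theorem comap {X' : Type v} {Y' : Set X'} {ς : Finset X → Finset X} [DecidableEq X]
    [DecidableEq X'] {f : X → X'} {g : X' → X} (h : IsMonotoneCompression Y m l ς)
    (hg : MapsTo g Y' Y) (hfg : LeftInvOn f g Y') :
    IsMonotoneCompression Y' m l fun s => (ς (s.image g)).image f := by
  have hgf : LeftInvOn g f (g '' Y') := hfg.rightInvOn_image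
  have hfg_image : ∀ s : Finset X', (s : Set X') ⊆ Y' → (s.image g).image f = s := fun s hsY => by
    rw [Finset.image_image]
    exact (Finset.image_congr fun x hx => hfg (hsY hx)).trans Finset.image_id
  have hgf_image : ∀ t : Finset X, (t : Set X) ⊆ g '' Y' → (t.image f).image g = t :=
    fun t htY => by
      rw [Finset.image_image]
      exact (Finset.image_congr fun x hx => hgf (htY hx)).trans Finset.image_id
  have himage : ∀ s : Finset X', s.card = m → (s : Set X') ⊆ Y' →
      (s.image g).card = m ∧ ((s.image g : Finset X) : Set X) ⊆ Y ∧
        ((ς (s.image g) : Finset X) : Set X) ⊆ g '' Y' := fun s hs hsY => by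
    have hcard : (s.image g).card = m := by
      rw [Finset.card_image_of_injOn (hfg.injOn.mono hsY), hs]
    have hsub : ((s.image g : Finset X) : Set X) ⊆ g '' Y' := by
      rw [Finset.coe_image]; exact image_mono hsY
    exact ⟨hcard, hsub.trans hg.image_subset,
      (Finset.coe_subset.2 (h.1 _ hcard (hsub.trans hg.image_subset)).1).trans hsub⟩
  refine ⟨fun s hs hsY => ?_, fun B => ?_⟩
  · obtain ⟨hcard, hsubY, hσY'⟩ := himage s hs hsY
    obtain ⟨hsub, hcardσ⟩ := h.1 _ hcard hsubY
    refine ⟨?_, ?_⟩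
    · calc (ς (s.image g)).image f ⊆ (s.image g).image f := Finset.image_subset_image hsub
        _ = s := hfg_image s hsY
    · rw [Finset.card_image_of_injOn (hgf.injOn.mono hσY'), hcardσ]
  · refine Finite.of_injOn (f := Finset.image g) (fun s ⟨hs, hsY, hB⟩ => ?_)
      (fun s ⟨_, hsY, _⟩ t ⟨_, htY, _⟩ hst => ?_) (h.2 (B.image g))
    · obtain ⟨hcard, hsubY, hσY'⟩ := himage s hs hsY
      exact ⟨hcard, hsubY, by rw [← hB, hgf_image _ hσY']⟩
    · rw [← hfg_image s hsY, ← hfg_image t htY, hst]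

theorem exists_of_lift_mk_le {X' : Type v} [Nonempty X] [Nonempty X'] {Y' : Set X'}
    {ς : Finset X → Finset X} (h : IsMonotoneCompression Y m l ς)
    (hle : lift.{u} #Y' ≤ lift.{v} #Y) :
    ∃ ς' : Finset X' → Finset X', IsMonotoneCompression Y' m l ς' := by
  classical
  obtain ⟨e⟩ := lift_mk_le'.1 hle
  let g : X' → X := fun x => if hx : x ∈ Y' then e ⟨x, hx⟩ else Classical.arbitrary X
  have hg : MapsTo g Y' Y := fun x hx => by simp only [g, dif_pos hx]; exact (e _).2
  have hinj : InjOn g Y' := fun x hx y hy hxy => by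
    simp only [g, dif_pos hx, dif_pos hy] at hxy
    exact congrArg Subtype.val (e.injective (Subtype.ext hxy))
  exact ⟨_, h.comap hg hinj.leftInvOn_invFunOn⟩

end IsMonotoneCompression

theorem exists_isMonotoneCompression_of_mk_lt {A Z : Set X} {σ : Finset X → Finset X}
    (hA : A.Infinite) (hAZ : A ⊆ Z) (hlt : #A < #Z)
    (h : IsMonotoneCompression Z (m + 1) (l + 1) σ) :
    ∃ ς : Finset X → Finset X, IsMonotoneCompression A m l ς := by
  classical
  have hlt' : #A < #↥(Z \ A) := by
    by_contra! hle
    have hA₀ : ℵ₀ ≤ #A := aleph0_le_mk_iff.2 hA.to_subtype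
    exact hlt.not_ge <| calc
      #Z ≤ #↥(Z \ A) + #A := le_mk_sdiff_add_mk Z A
      _ ≤ #A + #A := add_le_add_left hle _
      _ = #A := add_eq_self hA₀
  obtain ⟨δ, hδ, hmem⟩ := h.exists_forall_mem_insert hA hAZ hlt'
  exact ⟨_, (h.mono (insert_subset hδ.1 hAZ)).erase_insert hδ.2 hmem⟩

end

theorem stmt_11_general (k l m : ℕ)
    (σ : Finset Ordinal → Finset Ordinal)
    (hσ : ∀ s : Finset Ordinal, s.card = m + 1 →
      (s : Set Ordinal) ⊆ Set.Iio (Cardinal.aleph (k + 1)).ord →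
      σ s ⊆ s ∧ (σ s).card = l + 1)
    (hfin : ∀ B : Finset Ordinal,
      {s : Finset Ordinal | s.card = m + 1 ∧
        (s : Set Ordinal) ⊆ Set.Iio (Cardinal.aleph (k + 1)).ord ∧ σ s = B}.Finite) :
    ∃ Y : Set Ordinal, Cardinal.mk Y = Cardinal.aleph k ∧
      ∃ ς : Finset Ordinal → Finset Ordinal,
        (∀ s : Finset Ordinal, s.card = m → (s : Set Ordinal) ⊆ Y →
          ς s ⊆ s ∧ (ς s).card = l) ∧
        ∀ B : Finset Ordinal,
          {s : Finset Ordinal | s.card = m ∧ (s : Set Ordinal) ⊆ Y ∧ ς s = B}.Finite := by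
  obtain ⟨ς, hς⟩ := exists_isMonotoneCompression_of_mk_lt (A := Iio (ℵ_ k).ord)
    (infinite_coe_iff.1 (Cardinal.infinite_iff.2 (by simp)))
    (Iio_subset_Iio (by simp)) (by simp) ⟨hσ, hfin⟩
  obtain ⟨ς', hς'⟩ := hς.exists_of_lift_mk_le (Y' := Iio (ℵ_ k).ord) (by simp)
  exact ⟨_, by simp, ς', hς'⟩

theorem stmt_11 (k l m : ℕ) (hml : m > l)
    (σ : Finset Ordinal → Finset Ordinal)
    (hσ : ∀ s : Finset Ordinal, s.card = m + 1 →
      (s : Set Ordinal) ⊆ Set.Iio (Cardinal.aleph (k + 1)).ord →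
      σ s ⊆ s ∧ (σ s).card = l + 1)
    (hfin : ∀ B : Finset Ordinal,
      {s : Finset Ordinal | s.card = m + 1 ∧
        (s : Set Ordinal) ⊆ Set.Iio (Cardinal.aleph (k + 1)).ord ∧ σ s = B}.Finite) :
    ∃ Y : Set Ordinal, Cardinal.mk Y = Cardinal.aleph k ∧
      ∃ ς : Finset Ordinal → Finset Ordinal,
        (∀ s : Finset Ordinal, s.card = m → (s : Set Ordinal) ⊆ Y →
          ς s ⊆ s ∧ (ς s).card = l) ∧
        ∀ B : Finset Ordinal,
          {s : Finset Ordinal | s.card = m ∧ (s : Set Ordinal) ⊆ Y ∧ ς s = B}.Finite :=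
  stmt_11_general k l m σ hσ hfin
end

section
/- For every set X and natural number k: X has cardinality at most ℵ_k if and only if there exists a finite-to-one function σ from the (k+2)-element subsets of X to the (k+1)-element subsets of X with σ(A) ⊆ A for every (k+2)-element subset A. -/
/-!
If `#X ≤ ℵ_k`, well-order `X` so that every initial segment has cardinality `< ℵ_k`. By induction
each segment `{y | y < m}` carries a finite-to-one shrinking `τ m` one level down (for `k = 0` the
segments are finite and the empty map works), and `σ A := {max A} ∪ τ_{max A} (A \ {max A})`.
Since `max A ∈ σ A ⊆ A`, a fiber of `σ` is a finite union of images of fibers of the `τ m`.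

Conversely, if `ℵ_{k+1} ≤ #X`, apply Kuratowski's free set theorem to the finite-valued map
`B ↦ {x ∉ B | σ (B ∪ {x}) = B}`: it yields a `(k+2)`-set `F` with `x ∉ f (F \ {x})` for all
`x ∈ F`, which fails for the point `x` that `σ` removes from `F`. The free set theorem for `ℵ_n` is
proved by induction on `n`: choose a set `Z` of size `ℵ_n` closed under `f`, a point `x ∉ Z`, and a
free set inside `Z` for `B ↦ f (B ∪ {x})`.
-/

open Cardinal Set Function

universe u

variable {X : Type u}

/-- Only the values of `σ` on `(n + 1)`-sets are constrained. -/
def IsFiniteToOneShrinking (n : ℕ) (σ : Finset X → Finset X) : Prop :=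
  (∀ A : Finset X, A.card = n + 1 → σ A ⊆ A ∧ (σ A).card = n) ∧
    ∀ B : Finset X, {A : Finset X | A.card = n + 1 ∧ σ A = B}.Finite

lemma lt_aleph_natCast_succ_iff {c : Cardinal} {k : ℕ} : c < ℵ_ (k + 1 : ℕ) ↔ c ≤ ℵ_ k := by
  rw [Nat.cast_succ, ← succ_aleph, Order.lt_succ_iff]

section Closure

variable (f : Finset X → Set X)

def closureStep (Z : Set X) : Set X :=
  Z ∪ ⋃ A : Finset Z, f (A.map (Embedding.subtype _))

lemma mk_finset_le_of_aleph0_le {c : Cardinal.{u}} (hc : ℵ₀ ≤ c) (h : #X ≤ c) :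
    #(Finset X) ≤ c := by
  classical
  exact (mk_le_of_surjective List.toFinset_surjective).trans
    ((mk_list_le_max X).trans (max_le hc h))

variable {f}

lemma mk_closureStep_le (hf : ∀ A, (f A).Finite) {c : Cardinal.{u}} (hc : ℵ₀ ≤ c) {Z : Set X}
    (hZ : #Z ≤ c) : #(closureStep f Z) ≤ c := by
  have hnew : #(⋃ A : Finset Z, f (A.map (Embedding.subtype _))) ≤ c :=
    calc _ ≤ #(Finset Z) * ⨆ A : Finset Z, #(f (A.map (Embedding.subtype _))) := mk_iUnion_le _
      _ ≤ c * ℵ₀ := mul_le_mul' (mk_finset_le_of_aleph0_le hc hZ)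
          (ciSup_le' fun A => (hf _).lt_aleph0.le)
      _ = c := mul_aleph0_eq hc
  calc #(closureStep f Z) ≤ c + c := (mk_union_le _ _).trans (add_le_add hZ hnew)
    _ = c := add_eq_self hc

lemma exists_superset_mk_le_forall_subset (hf : ∀ A, (f A).Finite) {c : Cardinal.{u}}
    (hc : ℵ₀ ≤ c) {Z₀ : Set X} (hZ₀ : #Z₀ ≤ c) :
    ∃ Z, Z₀ ⊆ Z ∧ #Z ≤ c ∧ ∀ A : Finset X, ↑A ⊆ Z → f A ⊆ Z := by
  classical
  set Zs : ℕ → Set X := fun n => (closureStep f)^[n] Z₀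
  have hmono : Monotone Zs := fun m n hmn =>
    monotone_iterate_of_id_le (fun _ => subset_union_left) hmn Z₀
  have hcard : ∀ n, #(Zs n) ≤ c := by
    intro n
    induction n with
    | zero => exact hZ₀
    | succ n ih => simpa only [Zs, iterate_succ_apply'] using mk_closureStep_le hf hc ih
  refine ⟨⋃ n, Zs n, subset_iUnion Zs 0, ?_, fun A hA => ?_⟩
  · calc #(⋃ n, Zs n) ≤ ℵ₀ * ⨆ n, #(Zs n) := by
          simpa only [lift_uzero, mk_nat, lift_aleph0] using mk_iUnion_le_lift Zs
      _ ≤ ℵ₀ * c := mul_le_mul' le_rfl (ciSup_le' hcard)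
      _ = c := aleph0_mul_eq hc
  · obtain ⟨n, hn⟩ := hmono.directed_le.exists_mem_subset_of_finset_subset_biUnion hA
    have hA : (A.subtype (· ∈ Zs n)).map (Embedding.subtype _) = A := Finset.subtype_map_of_mem hn
    calc f A ⊆ closureStep f (Zs n) := fun x hx =>
          Or.inr (mem_iUnion.2 ⟨A.subtype (· ∈ Zs n), by rwa [hA]⟩)
      _ = Zs (n + 1) := (iterate_succ_apply' _ _ _).symm
      _ ⊆ ⋃ n, Zs n := subset_iUnion Zs _

end Closure

/-- Kuratowski's free set theorem. -/
theorem exists_finset_card_eq_forall_notMem_erase [DecidableEq X] {f : Finset X → Set X}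
    (hf : ∀ A, (f A).Finite) (n : ℕ) {Y : Set X} (hY : ℵ_ n ≤ #Y) :
    ∃ F : Finset X, ↑F ⊆ Y ∧ F.card = n + 1 ∧ ∀ x ∈ F, x ∉ f (F.erase x) := by
  induction n generalizing f Y with
  | zero =>
    have hYinf : Y.Infinite := infinite_coe_iff.1 (aleph0_le_mk_iff.1 (by simpa using hY))
    obtain ⟨x, hxY, hx⟩ := (hYinf.sdiff (hf ∅)).nonempty
    exact ⟨{x}, by simpa using hxY, rfl, by simpa using hx⟩
  | succ n ih =>
    obtain ⟨Z₀, hZ₀Y, hZ₀⟩ := le_mk_iff_exists_subset.1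
      ((aleph_le_aleph.2 (by simp)).trans hY : ℵ_ n ≤ #Y)
    obtain ⟨Z, hZ₀Z, hZ, hZf⟩ :=
      exists_superset_mk_le_forall_subset hf (aleph0_le_aleph n) hZ₀.le
    obtain ⟨x, hxY, hxZ⟩ : ∃ x ∈ Y, x ∉ Z := not_subset.1 fun hYZ =>
      (lt_aleph_natCast_succ_iff.2 hZ).not_ge (hY.trans (mk_le_mk_of_subset hYZ))
    -- `x ∉ Z` and `Z` is closed, so `x ∉ f F` for every `F ⊆ Z`.
    obtain ⟨F, hFYZ, hF, hFfree⟩ := ih (f := fun A => f (insert x A)) (Y := Y ∩ Z) (fun _ => hf _)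
      (hZ₀.symm.le.trans (mk_le_mk_of_subset (subset_inter hZ₀Y hZ₀Z)))
    have hxF : x ∉ F := fun h => hxZ (hFYZ h).2
    refine ⟨insert x F, ?_, by rw [Finset.card_insert_of_notMem hxF, hF], ?_⟩
    · rw [Finset.coe_insert]
      exact insert_subset hxY (hFYZ.trans inter_subset_left)
    · refine Finset.forall_mem_insert _ _ _ |>.2 ⟨?_, fun y hy => ?_⟩
      · rw [Finset.erase_insert hxF]
        exact fun hx => hxZ (hZf F (hFYZ.trans inter_subset_right) hx)
      · rw [Finset.erase_insert_of_ne (ne_of_mem_of_not_mem hy hxF).symm]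
        exact hFfree y hy

theorem mk_le_aleph_of_isFiniteToOneShrinking {n : ℕ} {σ : Finset X → Finset X}
    (hσ : IsFiniteToOneShrinking (n + 1) σ) : #X ≤ ℵ_ n := by
  classical
  by_contra! hlt
  set f : Finset X → Set X := fun B => {x | x ∉ B ∧ (insert x B).card = n + 2 ∧ σ (insert x B) = B}
  have hf : ∀ B, (f B).Finite := fun B =>
    Finite.of_finite_image ((hσ.2 B).subset fun _ ⟨_, ⟨_, hcard, hσx⟩, hA⟩ => hA ▸ ⟨hcard, hσx⟩)
      fun x hx y _ hxy => (Finset.insert_inj hx.1).1 hxy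
  obtain ⟨F, -, hF, hFfree⟩ := exists_finset_card_eq_forall_notMem_erase hf (n + 1) (Y := univ)
    (by rwa [mk_univ, ← not_lt, lt_aleph_natCast_succ_iff, not_le])
  obtain ⟨hσF, hσFcard⟩ := hσ.1 F hF
  obtain ⟨x, hxσ, hσx⟩ := Finset.exists_eq_insert_iff.2 ⟨hσF, by rw [hσFcard, hF]⟩
  refine hFfree x (hσx ▸ Finset.mem_insert_self x _) ?_
  rw [← hσx, Finset.erase_insert hxσ]
  exact ⟨hxσ, by rw [hσx, hF], by rw [hσx]⟩

section LinearOrder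

variable [LinearOrder X]

def shrinkBelowMax (τ : ∀ m : X, Finset {y // y < m} → Finset {y // y < m}) (A : Finset X) :
    Finset X :=
  if h : A.Nonempty then
    insert (A.max' h)
      ((τ _ ((A.erase (A.max' h)).subtype (· < A.max' h))).map (Embedding.subtype _))
  else ∅

lemma exists_shrinkBelowMax_eq (τ : ∀ m : X, Finset {y // y < m} → Finset {y // y < m})
    {n : ℕ} {A : Finset X} (hA : A.card = n + 2) :
    ∃ m, ∃ C : Finset {y // y < m}, C.card = n + 1 ∧ insert m (C.map (Embedding.subtype _)) = A ∧
      shrinkBelowMax τ A = insert m ((τ m C).map (Embedding.subtype _)) := by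
  have hne : A.Nonempty := Finset.card_pos.1 (by omega)
  have hC : ((A.erase (A.max' hne)).subtype (· < A.max' hne)).map (Embedding.subtype _) =
      A.erase (A.max' hne) :=
    Finset.subtype_map_of_mem fun _ => A.lt_max'_of_mem_erase_max' hne
  refine ⟨A.max' hne, _, ?_, by rw [hC, Finset.insert_erase (A.max'_mem hne)], dif_pos hne⟩
  rw [← Finset.card_map, hC, Finset.card_erase_of_mem (A.max'_mem hne), hA]
  rfl

lemma notMem_map_subtype_lt (m : X) (C : Finset {y // y < m}) :
    m ∉ C.map (Embedding.subtype _) :=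
  Finset.notMem_map_subtype_of_not_property C (lt_irrefl m)

lemma subtype_map_subtype_lt (m : X) (C : Finset {y // y < m}) :
    (C.map (Embedding.subtype _)).subtype (· < m) = C := by
  ext y; simp [y.2]

lemma isFiniteToOneShrinking_shrinkBelowMax {n : ℕ}
    {τ : ∀ m : X, Finset {y // y < m} → Finset {y // y < m}}
    (hτ : ∀ m, IsFiniteToOneShrinking n (τ m)) :
    IsFiniteToOneShrinking (n + 1) (shrinkBelowMax τ) := by
  refine ⟨fun A hA => ?_, fun B => ?_⟩
  · obtain ⟨m, C, hC, rfl, hσ⟩ := exists_shrinkBelowMax_eq τ hA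
    obtain ⟨hτC, hτCcard⟩ := (hτ m).1 C hC
    rw [hσ, Finset.card_insert_of_notMem (notMem_map_subtype_lt m _), Finset.card_map, hτCcard]
    exact ⟨Finset.insert_subset_insert _ (Finset.map_subset_map.2 hτC), rfl⟩
  · -- `max A ∈ σ A`, so the maximum of an element of the fiber over `B` lies in `B`.
    refine ((B.finite_toSet.biUnion fun m _ => ((hτ m).2 ((B.erase m).subtype (· < m))).image
      fun C => insert m (C.map (Embedding.subtype _)))).subset ?_
    rintro A ⟨hA, hAB⟩
    obtain ⟨m, C, hC, rfl, hσ⟩ := exists_shrinkBelowMax_eq τ hA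
    rw [hσ] at hAB
    refine mem_biUnion (hAB ▸ Finset.mem_insert_self _ _ : m ∈ B) ⟨C, ⟨hC, ?_⟩, rfl⟩
    rw [← hAB, Finset.erase_insert (notMem_map_subtype_lt m _), subtype_map_subtype_lt]

theorem exists_isFiniteToOneShrinking_succ {n : ℕ}
    (h : ∀ m : X, ∃ τ : Finset {y // y < m} → Finset {y // y < m}, IsFiniteToOneShrinking n τ) :
    ∃ σ : Finset X → Finset X, IsFiniteToOneShrinking (n + 1) σ := by
  choose τ hτ using h
  exact ⟨shrinkBelowMax τ, isFiniteToOneShrinking_shrinkBelowMax hτ⟩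

end LinearOrder

lemma exists_linearOrder_mk_lt_lt {c : Cardinal.{u}} (h : #X ≤ c) :
    ∃ _ : LinearOrder X, ∀ m : X, #{y // y < m} < c := by
  obtain ⟨ρ⟩ : Nonempty (X ↪ c.ord.ToType) := by rwa [← le_def, mk_ord_toType]
  let := LinearOrder.lift' ρ ρ.injective
  refine ⟨this, fun m => lt_of_le_of_lt ?_ (by simpa using mk_Iio_lt (ρ m))⟩
  exact mk_le_of_injective (f := fun y => (⟨ρ y, y.2⟩ : Iio (ρ m)))
    fun y z h => Subtype.ext (ρ.injective (congrArg Subtype.val h))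

lemma isFiniteToOneShrinking_zero [Finite X] : IsFiniteToOneShrinking 0 fun _ : Finset X => ∅ :=
  ⟨fun _ _ => ⟨Finset.empty_subset _, Finset.card_empty⟩, fun _ => toFinite _⟩

theorem exists_isFiniteToOneShrinking_of_mk_le_aleph (k : ℕ) {X : Type u} (h : #X ≤ ℵ_ k) :
    ∃ σ : Finset X → Finset X, IsFiniteToOneShrinking (k + 1) σ := by
  induction k generalizing X with
  | zero =>
    obtain ⟨_, hlt⟩ := exists_linearOrder_mk_lt_lt h
    refine exists_isFiniteToOneShrinking_succ fun m => ?_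
    have : Finite {y // y < m} := lt_aleph0_iff_finite.1 (by simpa using hlt m)
    exact ⟨_, isFiniteToOneShrinking_zero⟩
  | succ k ih =>
    obtain ⟨_, hlt⟩ := exists_linearOrder_mk_lt_lt h
    exact exists_isFiniteToOneShrinking_succ fun m => ih (lt_aleph_natCast_succ_iff.1 (hlt m))

theorem stmt_13 (X : Type*) (k : ℕ) :
    Cardinal.mk X ≤ Cardinal.aleph k ↔
    ∃ σ : Finset X → Finset X,
      (∀ A : Finset X, A.card = k + 2 → σ A ⊆ A ∧ (σ A).card = k + 1) ∧
      ∀ B : Finset X, {A : Finset X | A.card = k + 2 ∧ σ A = B}.Finite :=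
  ⟨exists_isFiniteToOneShrinking_of_mk_le_aleph k,
    fun ⟨_, hσ⟩ => mk_le_aleph_of_isFiniteToOneShrinking hσ⟩
end

section
/- The following statement is equivalent to 2^{ℵ₀} < ℵ_ω: there exist a natural number m and a finite-to-one function σ from the (m+1)-element subsets of the real unit interval [0,1] to its m-element subsets with σ(A) ⊆ A for all A. -/
/-!
A set `s` carries an `(m+1) → m` compression `σ` (with `σ A ⊆ A` and finite fibres) iff `#s < ℵ_m`;
for `m = 0` both sides say that `s` is finite.

If `#s ≤ ℵ_m`, well-order `s` so that every initial segment `Iio x` has size `< ℵ_m`, hence carries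
an `(m+1) → m` compression `τ x`; then `A ↦ insert (max A) (τ (max A) (A.erase (max A)))` is an
`(m+2) → (m+1)` compression of `s`: its value on `A` has maximum `max A`, so the fibres stay finite.

Conversely, let `σ` be an `(m+2) → (m+1)` compression of `s` with `#s ≥ ℵ_{m+1}` and take `t ⊆ s`
with `#t = ℵ_m`. For each finite `C ⊆ t` only finitely many `x` satisfy `σ (insert x C) = C`, so
some `x ∈ s \ t` avoids all of them. Then `C ↦ (σ (insert x C)).erase x` is an `(m+1) → m`
compression of `t`, contradicting `#t = ℵ_m` by induction.

As `ℵ_ω = ⨆ n, ℵ_n`, the theorem is the case `s = [0, 1]`.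
-/

open Cardinal Set

universe u

variable {α : Type u}

theorem Cardinal.mk_biUnion_le_of_finite {ι : Type u} {T : Set ι} {A : ι → Set α}
    (hA : ∀ i ∈ T, (A i).Finite) {c : Cardinal.{u}} (hc : ℵ₀ ≤ c) (hT : #T ≤ c) :
    #(⋃ i ∈ T, A i) ≤ c :=
  calc #(⋃ i ∈ T, A i) ≤ #T * ⨆ i : T, #(A i) := mk_biUnion_le A T
    _ ≤ c * c := mul_le_mul' hT (ciSup_le' fun i => (hA i i.2).lt_aleph0.le.trans hc)
    _ = c := mul_eq_self hc

theorem Cardinal.mk_setOf_finset_coe_subset {t : Set α} (ht : ℵ₀ ≤ #t) :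
    #{C : Finset α | ↑C ⊆ t} = #t := by
  have : Infinite t := infinite_iff.2 ht
  rw [← mk_finset_of_infinite t]
  exact mk_congr (Equiv.finsetSubtypeComm (· ∈ t)).symm

structure IsCompressionOn (s : Set α) (m : ℕ) (σ : Finset α → Finset α) : Prop where
  subset : ∀ ⦃A : Finset α⦄, ↑A ⊆ s → A.card = m + 1 → σ A ⊆ A
  card : ∀ ⦃A : Finset α⦄, ↑A ⊆ s → A.card = m + 1 → (σ A).card = m
  finite_fiber : ∀ B, {A : Finset α | ↑A ⊆ s ∧ A.card = m + 1 ∧ σ A = B}.Finite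

theorem isCompressionOn_univ_iff {m : ℕ} {σ : Finset α → Finset α} :
    IsCompressionOn univ m σ ↔
      (∀ A : Finset α, A.card = m + 1 → σ A ⊆ A ∧ (σ A).card = m) ∧
        ∀ B, {A : Finset α | A.card = m + 1 ∧ σ A = B}.Finite := by
  refine ⟨fun h => ⟨fun A hA => ⟨h.subset (subset_univ _) hA, h.card (subset_univ _) hA⟩,
      fun B => ?_⟩, fun h => ⟨fun A _ hA => (h.1 A hA).1, fun A _ hA => (h.1 A hA).2, fun B => ?_⟩⟩
  · simpa only [subset_univ, true_and] using h.finite_fiber B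
  · simpa only [subset_univ, true_and] using h.2 B

theorem isCompressionOn_zero_of_finite {s : Set α} (hs : s.Finite) :
    IsCompressionOn s 0 fun _ => ∅ where
  subset _ _ _ := Finset.empty_subset _
  card _ _ _ := Finset.card_empty
  finite_fiber _ := (hs.finite_subsets.preimage Finset.coe_injective.injOn).subset
    fun _ hA => hA.1

namespace IsCompressionOn

variable {s t : Set α} {m : ℕ} {σ : Finset α → Finset α}

theorem mono (h : IsCompressionOn t m σ) (hst : s ⊆ t) : IsCompressionOn s m σ where
  subset _ hA := h.subset (hA.trans hst)
  card _ hA := h.card (hA.trans hst)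
  finite_fiber B := (h.finite_fiber B).subset fun _ ⟨hA, hAc, hAB⟩ => ⟨hA.trans hst, hAc, hAB⟩

theorem finite (h : IsCompressionOn s 0 σ) : s.Finite := by
  have hsingle : ∀ a ∈ s, ({a} : Finset α) ∈ {A : Finset α | ↑A ⊆ s ∧ A.card = 1 ∧ σ A = ∅} :=
    fun a ha =>
      have hA : ↑({a} : Finset α) ⊆ s := by simpa using ha
      ⟨hA, Finset.card_singleton a, Finset.card_eq_zero.1 (h.card hA (Finset.card_singleton a))⟩
  exact ((h.finite_fiber ∅).subset (image_subset_iff.2 hsingle)).of_finite_image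
    Finset.singleton_injective.injOn

theorem finite_setOf_compress_insert_eq [DecidableEq α] (h : IsCompressionOn s m σ)
    (C : Finset α) :
    {x | x ∉ C ∧ ↑(insert x C) ⊆ s ∧ (insert x C).card = m + 1 ∧ σ (insert x C) = C}.Finite := by
  refine Finite.of_finite_image (f := fun x => insert x C) ((h.finite_fiber C).subset ?_) ?_
  · rintro _ ⟨x, ⟨-, hx⟩, rfl⟩
    exact hx
  · intro x hx y hy hxy
    simpa using (Finset.insert_inj hx.1).1 hxy

theorem link [DecidableEq α] {x : α} (h : IsCompressionOn (insert x t) (m + 1) σ) (hx : x ∉ t)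
    (hσ : ∀ C : Finset α, ↑C ⊆ t → C.card = m + 1 → σ (insert x C) ≠ C) :
    IsCompressionOn t m fun C => (σ (insert x C)).erase x := by
  have key : ∀ C : Finset α, ↑C ⊆ t → C.card = m + 1 →
      x ∉ C ∧ σ (insert x C) ⊆ insert x C ∧ x ∈ σ (insert x C) ∧ (σ (insert x C)).card = m + 1 := by
    intro C hCt hC
    have hxC : x ∉ C := fun hxC => hx (hCt hxC)
    have hsub : ↑(insert x C) ⊆ insert x t := by
      rw [Finset.coe_insert]; exact insert_subset_insert hCt
    have hcard : (insert x C).card = m + 1 + 1 := by rw [Finset.card_insert_of_notMem hxC, hC]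
    refine ⟨hxC, h.subset hsub hcard, ?_, h.card hsub hcard⟩
    by_contra hxσ
    -- otherwise `σ (insert x C)` is an `(m+1)`-subset of `C`, hence `C` itself
    refine hσ C hCt hC (Finset.eq_of_subset_of_card_le ?_ ?_)
    · exact (Finset.subset_insert_iff_of_notMem hxσ).1 (h.subset hsub hcard)
    · rw [hC, h.card hsub hcard]
  refine ⟨fun C hCt hC => ?_, fun C hCt hC => ?_, fun B => ?_⟩
  · obtain ⟨hxC, hsub, -, -⟩ := key C hCt hC
    simpa [Finset.erase_insert hxC] using Finset.erase_subset_erase x hsub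
  · obtain ⟨-, -, hxσ, hcard⟩ := key C hCt hC
    rw [Finset.card_erase_of_mem hxσ, hcard, Nat.add_sub_cancel]
  · refine Finite.of_finite_image (f := fun C => insert x C)
      ((h.finite_fiber (insert x B)).subset ?_) ?_
    · rintro _ ⟨C, ⟨hCt, hC, hCB⟩, rfl⟩
      obtain ⟨hxC, -, hxσ, -⟩ := key C hCt hC
      refine ⟨?_, by rw [Finset.card_insert_of_notMem hxC, hC], ?_⟩
      · rw [Finset.coe_insert]; exact insert_subset_insert hCt
      · rw [← hCB, Finset.insert_erase hxσ]
    · intro C₁ h₁ C₂ h₂ hC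
      have hx₁ : x ∉ C₁ := fun hxC => hx (h₁.1 hxC)
      have hx₂ : x ∉ C₂ := fun hxC => hx (h₂.1 hxC)
      rw [← Finset.erase_insert hx₁, ← Finset.erase_insert hx₂]
      exact congrArg (Finset.erase · x) hC

theorem exists_forall_compress_insert_ne [DecidableEq α] (h : IsCompressionOn s m σ) (hts : t ⊆ s)
    (ht : ℵ₀ ≤ #t) (hts' : #t < #s) :
    ∃ x ∈ s, x ∉ t ∧ ∀ C : Finset α, ↑C ⊆ t → C.card = m → σ (insert x C) ≠ C := by
  set bad : Finset α → Set α := fun C =>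
    {x | x ∉ C ∧ ↑(insert x C) ⊆ s ∧ (insert x C).card = m + 1 ∧ σ (insert x C) = C}
  have hbad : #(t ∪ ⋃ C ∈ {C : Finset α | ↑C ⊆ t}, bad C : Set α) ≤ #t :=
    calc _ ≤ #t + #(⋃ C ∈ {C : Finset α | ↑C ⊆ t}, bad C) := mk_union_le _ _
      _ ≤ #t + #t := add_le_add le_rfl <| mk_biUnion_le_of_finite
          (fun C _ => h.finite_setOf_compress_insert_eq C) ht (mk_setOf_finset_coe_subset ht).le
      _ = #t := add_eq_self ht
  obtain ⟨x, hxs, hx⟩ := not_subset.1 fun hs => (mk_le_mk_of_subset hs).trans hbad |>.not_gt hts'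
  simp only [mem_union, mem_iUnion, not_or, not_exists] at hx
  refine ⟨x, hxs, hx.1, fun C hCt hC hσ => hx.2 C hCt ⟨fun hxC => hx.1 (hCt hxC), ?_, ?_, hσ⟩⟩
  · rw [Finset.coe_insert]; exact insert_subset hxs (hCt.trans hts)
  · rw [Finset.card_insert_of_notMem fun hxC => hx.1 (hCt hxC), hC]

theorem mk_lt_aleph (h : IsCompressionOn s m σ) : #s < ℵ_ m := by
  classical
  induction m generalizing s σ with
  | zero => simpa using h.finite.lt_aleph0
  | succ m ih =>
    by_contra! hs
    have hm : ℵ_ m < ℵ_ (m + 1 : ℕ) := aleph_lt_aleph.2 (by exact_mod_cast m.lt_succ_self)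
    obtain ⟨t, hts, ht⟩ := le_mk_iff_exists_subset.1 (hm.le.trans hs)
    obtain ⟨x, hxs, hxt, hσ⟩ := h.exists_forall_compress_insert_ne hts
      (ht ▸ aleph0_le_aleph _) (ht ▸ hm.trans_le hs)
    exact (ih ((h.mono (insert_subset hxs hts)).link hxt hσ)).ne ht

theorem of_univ_subtype [DecidablePred (· ∈ s)] {σ : Finset s → Finset s}
    (h : IsCompressionOn univ m σ) :
    IsCompressionOn s m fun A => (σ (A.subtype (· ∈ s))).map (Function.Embedding.subtype _) := by
  have hmap : ∀ {A : Finset α}, ↑A ⊆ s →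
      (A.subtype (· ∈ s)).map (Function.Embedding.subtype _) = A :=
    fun hA => Finset.subtype_map_of_mem fun _ ha => hA ha
  have hcard : ∀ {A : Finset α}, ↑A ⊆ s → (A.subtype (· ∈ s)).card = A.card := fun hA => by
    rw [← Finset.card_map (Function.Embedding.subtype _), hmap hA]
  refine ⟨fun A hA hAc => ?_, fun A hA hAc => ?_, fun B => ?_⟩
  · conv_rhs => rw [← hmap hA]
    exact Finset.map_subset_map.2 (h.subset (subset_univ _) ((hcard hA).trans hAc))
  · rw [Finset.card_map, h.card (subset_univ _) ((hcard hA).trans hAc)]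
  · refine ((h.finite_fiber (B.subtype (· ∈ s))).image
      (Finset.map (Function.Embedding.subtype _))).subset ?_
    rintro A ⟨hA, hAc, rfl⟩
    refine ⟨A.subtype (· ∈ s), ⟨subset_univ _, (hcard hA).trans hAc, ?_⟩, hmap hA⟩
    refine (Finset.map_injective (Function.Embedding.subtype _)
      (Finset.subtype_map_of_mem fun a ha => ?_)).symm
    obtain ⟨b, -, rfl⟩ := Finset.mem_map.1 ha
    exact b.2

end IsCompressionOn

section LinearOrder

variable [LinearOrder α]

def compressTop (τ : α → Finset α → Finset α) (A : Finset α) : Finset α :=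
  if hA : A.Nonempty then insert (A.max' hA) (τ (A.max' hA) (A.erase (A.max' hA))) else ∅

theorem Finset.exists_eq_insert_coe_subset_Iio {A : Finset α} (hA : A.Nonempty) :
    ∃ x C, ↑C ⊆ Set.Iio x ∧ A = insert x C :=
  ⟨A.max' hA, A.erase (A.max' hA), fun _ hy => A.lt_max'_of_mem_erase_max' hA hy,
    (Finset.insert_erase (A.max'_mem hA)).symm⟩

theorem compressTop_insert (τ : α → Finset α → Finset α) {x : α} {C : Finset α}
    (hC : ↑C ⊆ Iio x) : compressTop τ (insert x C) = insert x (τ x C) := by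
  have hmax : (insert x C).max' (Finset.insert_nonempty x C) = x :=
    (Finset.max'_eq_iff _ _ x).2 ⟨Finset.mem_insert_self x C, fun b hb => by
      rcases Finset.mem_insert.1 hb with rfl | hb
      exacts [le_rfl, (hC hb).le]⟩
  rw [compressTop, dif_pos (Finset.insert_nonempty x C), hmax,
    Finset.erase_insert fun hx => lt_irrefl x (hC hx)]

theorem isCompressionOn_compressTop {m : ℕ} {τ : α → Finset α → Finset α}
    (h : ∀ x, IsCompressionOn (Iio x) m (τ x)) : IsCompressionOn univ (m + 1) (compressTop τ) := by
  have key : ∀ {x : α} {C : Finset α}, ↑C ⊆ Iio x → (insert x C).card = m + 1 + 1 →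
      x ∉ C ∧ C.card = m + 1 ∧ τ x C ⊆ C ∧ (τ x C).card = m := by
    intro x C hC hcard
    have hxC : x ∉ C := fun hx => lt_irrefl x (hC hx)
    have hCc : C.card = m + 1 := by
      rw [Finset.card_insert_of_notMem hxC] at hcard; omega
    exact ⟨hxC, hCc, (h x).subset hC hCc, (h x).card hC hCc⟩
  have hne : ∀ {A : Finset α}, A.card = m + 1 + 1 → A.Nonempty :=
    fun hA => Finset.card_pos.1 (by omega)
  refine ⟨fun A _ hA => ?_, fun A _ hA => ?_, fun B => ?_⟩
  · obtain ⟨x, C, hC, rfl⟩ := Finset.exists_eq_insert_coe_subset_Iio (hne hA)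
    rw [compressTop_insert τ hC]
    exact Finset.insert_subset_insert x (key hC hA).2.2.1
  · obtain ⟨x, C, hC, rfl⟩ := Finset.exists_eq_insert_coe_subset_Iio (hne hA)
    obtain ⟨hxC, -, hsub, hcard⟩ := key hC hA
    rw [compressTop_insert τ hC, Finset.card_insert_of_notMem fun hx => hxC (hsub hx), hcard]
  · refine (B.finite_toSet.biUnion fun x _ =>
      ((h x).finite_fiber (B.erase x)).image (insert x)).subset ?_
    rintro A ⟨-, hA, hAB⟩
    obtain ⟨x, C, hC, rfl⟩ := Finset.exists_eq_insert_coe_subset_Iio (hne hA)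
    obtain ⟨hxC, hCc, hsub, -⟩ := key hC hA
    rw [compressTop_insert τ hC] at hAB
    subst hAB
    refine mem_biUnion (Finset.mem_insert_self x _) ⟨C, ⟨hC, hCc, ?_⟩, rfl⟩
    rw [Finset.erase_insert fun hx => hxC (hsub hx)]

end LinearOrder

theorem exists_isCompressionOn_of_mk_lt_aleph {m : ℕ} {s : Set α} (hs : #s < ℵ_ m) :
    ∃ σ, IsCompressionOn s m σ := by
  classical
  induction m generalizing α with
  | zero =>
    rw [Nat.cast_zero, aleph_zero, lt_aleph0_iff_set_finite] at hs
    exact ⟨_, isCompressionOn_zero_of_finite hs⟩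
  | succ m ih =>
    rw [Nat.cast_succ, ← succ_aleph, Order.lt_succ_iff] at hs
    obtain ⟨_, _, hord⟩ := Cardinal.exists_ord_eq_type_lt s
    have hIio : ∀ x : s, ∃ τ, IsCompressionOn (Iio x) m τ :=
      fun x => ih ((mk_Iio_lt x hord).trans_le hs)
    choose τ hτ using hIio
    exact ⟨_, (isCompressionOn_compressTop hτ).of_univ_subtype⟩

theorem exists_isCompressionOn_iff_mk_lt_aleph {m : ℕ} {s : Set α} :
    (∃ σ, IsCompressionOn s m σ) ↔ #s < ℵ_ m :=
  ⟨fun ⟨_, h⟩ => h.mk_lt_aleph, exists_isCompressionOn_of_mk_lt_aleph⟩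

theorem Cardinal.lt_aleph_omega0_iff {c : Cardinal.{u}} :
    c < ℵ_ Ordinal.omega0 ↔ ∃ n : ℕ, c < ℵ_ n := by
  refine ⟨fun hc => ?_, fun ⟨n, hn⟩ => hn.trans (aleph_lt_aleph.2 (Ordinal.natCast_lt_omega0 n))⟩
  by_contra! hn
  refine hc.not_ge ?_
  rw [aleph_limit Ordinal.isSuccLimit_omega0]
  refine ciSup_le' fun ⟨o, ho⟩ => ?_
  obtain ⟨n, rfl⟩ := Ordinal.lt_omega0.1 ho
  exact hn n

theorem stmt_14 :
    Cardinal.continuum < Cardinal.aleph Ordinal.omega0 ↔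
    ∃ (m : ℕ) (σ : Finset (Set.Icc (0 : ℝ) 1) → Finset (Set.Icc (0 : ℝ) 1)),
      (∀ A : Finset (Set.Icc (0 : ℝ) 1), A.card = m + 1 →
        σ A ⊆ A ∧ (σ A).card = m) ∧
      ∀ B : Finset (Set.Icc (0 : ℝ) 1),
        {A : Finset (Set.Icc (0 : ℝ) 1) | A.card = m + 1 ∧ σ A = B}.Finite := by
  simp only [← isCompressionOn_univ_iff, exists_isCompressionOn_iff_mk_lt_aleph, mk_univ,
    mk_Icc_real zero_lt_one, lt_aleph_omega0_iff]
  exact exists_congr fun n => by rw [← lift_continuum.{_, 0}, lift_lt_aleph_natCast]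
end

section
/- Let m ∈ ℕ, let Δ = {x ∈ [0,1]^{m+1} : x₀ < x₁ < ... < x_m} and let σ : Δ → [0,1]^m be a continuous map such that for every x ∈ Δ the coordinates of σ(x) form a subset of the coordinates of x. Then for each i ≤ m the set O_i = {x ∈ Δ : σ(x) = (x₀,...,x_{i-1},x_{i+1},...,x_m)} is open in Δ. -/
theorem stmt_15 (m : ℕ)
    (Δ : Set (Fin (m + 1) → ℝ))
    (hΔ : Δ = {x | (∀ i, x i ∈ Set.Icc (0 : ℝ) 1) ∧ StrictMono x})
    (σ : (Fin (m + 1) → ℝ) → (Fin m → ℝ))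
    (hcont : ContinuousOn σ Δ)
    (hdel : ∀ x ∈ Δ, ∃ i : Fin (m + 1), σ x = x ∘ i.succAbove) :
    ∀ i : Fin (m + 1),
      ∃ U : Set (Fin (m + 1) → ℝ), IsOpen U ∧
        {x ∈ Δ | σ x = x ∘ i.succAbove} = U ∩ Δ := by
  intro i
  -- work in the subtype Δ
  set S : Fin (m + 1) → Set Δ := fun j => {x : Δ | σ ↑x = ↑x ∘ j.succAbove} with hS
  have hcont' : Continuous (fun x : Δ => σ ↑x) :=
    continuousOn_iff_continuous_restrict.mp hcont
  have hclosed : ∀ j : Fin (m + 1), IsClosed (S j) := by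
    intro j
    exact isClosed_eq hcont'
      (continuous_pi fun k => (continuous_apply (j.succAbove k)).comp continuous_subtype_val)
  -- uniqueness of the deleted index
  have huniq : ∀ (x : Δ) (j k : Fin (m + 1)),
      (↑x : Fin (m + 1) → ℝ) ∘ j.succAbove = ↑x ∘ k.succAbove → j = k := by
    intro x j k h
    have hx : StrictMono (↑x : Fin (m + 1) → ℝ) := (hΔ.le x.2).2
    have : j.succAbove = k.succAbove := by
      funext l
      exact hx.injective (congrFun h l)
    exact Fin.succAbove_left_injective this
  -- S i is the complement of the union of the other S j's
  have hSi : S i = (⋃ j ∈ ({i}ᶜ : Set (Fin (m + 1))), S j)ᶜ := by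
    ext x
    simp only [Set.mem_compl_iff, Set.mem_iUnion, Set.mem_singleton_iff, not_exists]
    constructor
    · intro hx j hj hxj
      exact hj (huniq x j i (hxj.symm.trans hx))
    · intro h
      obtain ⟨j, hj⟩ := hdel ↑x x.2
      by_cases hji : j = i
      · exact hji ▸ hj
      · exact absurd hj (h j hji)
  have hopen : IsOpen (S i) := by
    rw [hSi]
    exact (Set.Finite.isClosed_biUnion (Set.toFinite _) fun j _ => hclosed j).isOpen_compl
  rw [isOpen_induced_iff] at hopen
  obtain ⟨U, hU, hUS⟩ := hopen
  refine ⟨U, hU, ?_⟩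
  ext x
  simp only [Set.mem_setOf_eq, Set.mem_inter_iff]
  constructor
  · rintro ⟨hxΔ, hx⟩
    refine ⟨?_, hxΔ⟩
    have : (⟨x, hxΔ⟩ : Δ) ∈ S i := hx
    rw [← hUS] at this
    exact this
  · rintro ⟨hxU, hxΔ⟩
    have : (⟨x, hxΔ⟩ : Δ) ∈ Subtype.val ⁻¹' U := hxU
    rw [hUS] at this
    exact ⟨hxΔ, this⟩
end

section
/- Let m ∈ ℕ, Δ = {x ∈ [0,1]^{m+1} : x₀ < ... < x_m}, and let σ : Δ → [0,1]^m be continuous with the property that σ(x) is always obtained from x by deleting one coordinate. Then σ is not finite-to-one: there exists y ∈ [0,1]^m whose preimage under σ is infinite. -/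
theorem stmt_17 (m : ℕ)
    (Δ : Set (Fin (m + 1) → ℝ))
    (hΔ : Δ = {x | (∀ i, x i ∈ Set.Icc (0 : ℝ) 1) ∧ StrictMono x})
    (σ : (Fin (m + 1) → ℝ) → (Fin m → ℝ))
    (hcont : ContinuousOn σ Δ)
    (hdel : ∀ x ∈ Δ, ∃ i : Fin (m + 1), σ x = x ∘ i.succAbove) :
    ∃ y : Fin m → ℝ, {x ∈ Δ | σ x = y}.Infinite := by
  classical
  set ε : ℝ := 1 / (m + 3) with hε
  have hεpos : 0 < ε := by positivity
  -- the generic point with a parameter t at slot i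
  set X : Fin (m + 1) → ℝ → (Fin (m + 1) → ℝ) :=
    fun i t k => if (k : ℕ) = (i : ℕ) then t else ((k : ℕ) + 1) * ε with hX
  -- membership lemma
  have hmem : ∀ (i : Fin (m + 1)) (t : ℝ), ((i : ℕ) : ℝ) * ε < t →
      t < (((i : ℕ) : ℝ) + 2) * ε → X i t ∈ Δ := by
    intro i t ht1 ht2
    have him : ((i : ℕ) : ℝ) ≤ m := by exact_mod_cast Nat.lt_succ_iff.mp i.isLt
    have hub : (((i : ℕ) : ℝ) + 2) * ε ≤ 1 := by
      rw [hε, mul_one_div, div_le_one (by positivity)]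
      linarith
    rw [hΔ]
    constructor
    · intro k
      have hkm : ((k : ℕ) : ℝ) ≤ m := by exact_mod_cast Nat.lt_succ_iff.mp k.isLt
      by_cases hk : (k : ℕ) = (i : ℕ)
      · have hXk : X i t k = t := by simp [hX, hk]
        rw [hXk]
        constructor
        · nlinarith [mul_nonneg (Nat.cast_nonneg (i : ℕ) : (0:ℝ) ≤ (i:ℕ)) hεpos.le]
        · linarith
      · simp only [hX, if_neg hk]
        constructor
        · positivity
        · rw [hε, mul_one_div, div_le_one (by positivity)]
          linarith
    · intro k l hkl
      have hkln : (k : ℕ) < (l : ℕ) := hkl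
      have hkl' : ((k : ℕ) : ℝ) < ((l : ℕ) : ℝ) := by exact_mod_cast hkln
      by_cases hk : (k : ℕ) = (i : ℕ) <;> by_cases hl : (l : ℕ) = (i : ℕ)
      · omega
      · simp only [hX, if_pos hk, if_neg hl]
        have : ((i : ℕ) : ℝ) + 2 ≤ ((l : ℕ) : ℝ) + 1 := by
          have : (i : ℕ) + 1 ≤ (l : ℕ) := by omega
          have : ((i : ℕ) : ℝ) + 1 ≤ ((l : ℕ) : ℝ) := by exact_mod_cast this
          linarith
        nlinarith
      · simp only [hX, if_neg hk, if_pos hl]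
        have : ((k : ℕ) : ℝ) + 1 ≤ ((i : ℕ) : ℝ) := by
          have : (k : ℕ) + 1 ≤ (i : ℕ) := by omega
          exact_mod_cast this
        nlinarith
      · simp only [hX, if_neg hk, if_neg hl]
        nlinarith
  -- the base point
  have hx0mem : ∀ i : Fin (m + 1), X i ((((i : ℕ) : ℝ) + 1) * ε) ∈ Δ := by
    intro i
    refine hmem i _ ?_ ?_ <;> nlinarith
  -- deletion index is unique
  have huniq : ∀ x ∈ Δ, ∀ i j : Fin (m + 1),
      x ∘ i.succAbove = x ∘ j.succAbove → i = j := by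
    intro x hx i j h
    rw [hΔ] at hx
    have hinj := hx.2.injective
    apply Fin.succAbove_left_injective
    funext k
    exact hinj (congrFun h k)
  -- Δ is convex, hence preconnected
  have hconv : Convex ℝ Δ := by
    rw [hΔ]
    intro x hx y hy a b ha hb hab
    refine ⟨fun i => ?_, fun i j hij => ?_⟩
    · have hx1 := hx.1 i; have hy1 := hy.1 i
      constructor <;> simp only [Pi.add_apply, Pi.smul_apply, smul_eq_mul]
      · nlinarith [mul_nonneg ha hx1.1, mul_nonneg hb hy1.1]
      · nlinarith [mul_le_mul_of_nonneg_left hx1.2 ha, mul_le_mul_of_nonneg_left hy1.2 hb]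
    · simp only [Pi.add_apply, Pi.smul_apply, smul_eq_mul]
      have h1 := hx.2 hij
      have h2 := hy.2 hij
      rcases lt_or_eq_of_le ha with ha' | ha'
      · nlinarith [mul_lt_mul_of_pos_left h1 ha', mul_le_mul_of_nonneg_left h2.le hb]
      · have hb' : 0 < b := by linarith
        nlinarith [mul_lt_mul_of_pos_left h2 hb']
  have hpre : IsPreconnected Δ := hconv.isPreconnected
  haveI : PreconnectedSpace Δ := Subtype.preconnectedSpace hpre
  -- the clopen sets
  set C : Fin (m + 1) → Set Δ := fun i => {z | σ z.val = z.val ∘ i.succAbove} with hC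
  have hCclosed : ∀ i, IsClosed (C i) := by
    intro i
    apply isClosed_eq hcont.restrict
    exact continuous_pi fun j => (continuous_apply (i.succAbove j)).comp continuous_subtype_val
  -- pick the index at the base point
  obtain ⟨i0, hi0⟩ := hdel _ (hx0mem 0)
  have hCne : (⟨_, hx0mem 0⟩ : Δ) ∈ C i0 := hi0
  have hCuniv : C i0 = Set.univ := by
    have hcompl : (C i0)ᶜ = ⋃ j, ⋃ _ : j ≠ i0, C j := by
      ext z
      simp only [Set.mem_compl_iff, Set.mem_iUnion, hC, Set.mem_setOf_eq]
      constructor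
      · intro hz
        obtain ⟨j, hj⟩ := hdel z.val z.2
        exact ⟨j, fun hji => hz (hji ▸ hj), hj⟩
      · rintro ⟨j, hji, hj⟩ hz
        exact hji (huniq z.val z.2 j i0 (hj ▸ hz ▸ rfl))
    have hopen : IsOpen (C i0) := by
      rw [← isClosed_compl_iff, hcompl]
      exact isClosed_iUnion_of_finite fun j => isClosed_iUnion_of_finite fun _ => hCclosed j
    rcases isClopen_iff.mp ⟨hCclosed i0, hopen⟩ with h | h
    · exact absurd (h ▸ hCne) (Set.notMem_empty _)
    · exact h
  have hσ : ∀ x ∈ Δ, σ x = x ∘ i0.succAbove := by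
    intro x hx
    exact Set.eq_univ_iff_forall.mp hCuniv ⟨x, hx⟩
  -- the fiber
  set a : ℝ := ((i0 : ℕ) : ℝ) * ε with ha
  set b : ℝ := (((i0 : ℕ) : ℝ) + 2) * ε with hb
  have hab : a < b := by rw [ha, hb]; nlinarith
  have hval : ∀ t ∈ Set.Ioo a b, ∀ j : Fin m,
      X i0 t (i0.succAbove j) = ((((i0.succAbove j) : ℕ) : ℝ) + 1) * ε := by
    intro t _ j
    have : ((i0.succAbove j : Fin (m+1)) : ℕ) ≠ (i0 : ℕ) :=
      fun h => Fin.succAbove_ne i0 j (Fin.val_injective h)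
    simp only [hX, if_neg this]
  refine ⟨X i0 (((((i0 : ℕ) : ℝ)) + 1) * ε) ∘ i0.succAbove, ?_⟩
  have hIooinf : (Set.Ioo a b).Infinite := Set.infinite_coe_iff.mp (Set.Ioo.infinite hab)
  have hinj : Set.InjOn (X i0) (Set.Ioo a b) := by
    intro t _ t' _ h
    have := congrFun h i0
    simpa only [hX, if_pos rfl] using this
  apply Set.Infinite.mono _ (hIooinf.image hinj)
  rintro _ ⟨t, ht, rfl⟩
  have htmem : X i0 t ∈ Δ := hmem i0 t ht.1 ht.2
  refine ⟨htmem, ?_⟩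
  rw [hσ _ htmem]
  funext j
  have h1 := hval t ht j
  have h2 : X i0 (((((i0 : ℕ) : ℝ)) + 1) * ε) (i0.succAbove j)
      = ((((i0.succAbove j) : ℕ) : ℝ) + 1) * ε := by
    have : ((i0.succAbove j : Fin (m+1)) : ℕ) ≠ (i0 : ℕ) :=
      fun h => Fin.succAbove_ne i0 j (Fin.val_injective h)
    simp only [hX, if_neg this]
  simp only [Function.comp_apply, h1, h2]
end

section
/- Let m ∈ ℕ, Δ = {x ∈ [0,1]^{m+1} : x₀ < ... < x_m}, and let σ : Δ → [0,1]^m be a Borel measurable map such that σ(x) is obtained from x by deleting one coordinate, for every x ∈ Δ. Then σ is not finite-to-one. Consequently there is no Borel measurable (m+1)→m monotone compression scheme for the finite subsets of [0,1]. -/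
/-!
Split `Δ` into the pieces `A i` on which `σ` deletes the `i`-th coordinate. These are Borel and
cover `Δ`, which has positive volume, so some `A i` has positive volume. Writing a point as its
`i`-th coordinate `t` together with the remaining coordinates `y`, Fubini gives a `y` whose slice
`{t | (t, y) ∈ A i}` has positive length, hence is infinite; all of its points are sent to `y` by `σ`.
-/

open MeasureTheory Set

theorem MeasureTheory.Measure.exists_infinite_slice_of_prod_ne_zero {α β : Type*}
    [MeasurableSpace α] [MeasurableSpace β] {μ : Measure α} {ν : Measure β}
    [SFinite μ] [SFinite ν] [NullSingletonClass μ] {s : Set (α × β)} (hs : MeasurableSet s)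
    (h : μ.prod ν s ≠ 0) : ∃ y, ((fun x => (x, y)) ⁻¹' s).Infinite := by
  by_contra! hfin
  exact h (by simp [Measure.prod_apply_symm hs, fun y => (hfin y).measure_zero μ])

theorem exists_infinite_fiber_comp_succAbove {α : Type*} [MeasureSpace α]
    [SigmaFinite (volume : Measure α)] [NullSingletonClass (volume : Measure α)] {n : ℕ}
    {A : Set (Fin (n + 1) → α)} (hA : MeasurableSet A) (h : volume A ≠ 0) (i : Fin (n + 1)) :
    ∃ y : Fin n → α, {x ∈ A | x ∘ i.succAbove = y}.Infinite := by
  let e := MeasurableEquiv.piFinSuccAbove (fun _ => α) i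
  have hS : volume (e.symm ⁻¹' A) ≠ 0 := by
    rwa [((volume_preserving_piFinSuccAbove _ i).symm e).measure_preimage hA.nullMeasurableSet]
  obtain ⟨y, hy⟩ := Measure.exists_infinite_slice_of_prod_ne_zero (μ := volume) (ν := volume)
    (e.symm.measurable hA) hS
  have hinj : Function.Injective fun t : α => i.insertNth (α := fun _ => α) t y :=
    fun s t hst => by simpa using congrFun hst i
  refine ⟨y, (hy.image hinj.injOn).mono ?_⟩
  rintro _ ⟨t, ht, rfl⟩
  exact ⟨ht, funext (Fin.insertNth_apply_succAbove (α := fun _ => α) i t y)⟩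

theorem MeasurableSet.sep_eq_fun {α β : Type*} [MeasurableSpace α] [MeasurableSpace β]
    [MeasurableEq β] {s : Set α} (hs : MeasurableSet s) {f g : α → β}
    (hf : Measurable (s.domRestrict f)) (hg : Measurable g) : MeasurableSet {x ∈ s | f x = g x} := by
  convert hs.subtype_image (measurableSet_eq_fun hf (hg.comp measurable_subtype_coe))
  ext x
  simp [Set.domRestrict, and_comm]

theorem measurableSet_setOf_strictMono {ι α : Type*} [Countable ι] [Preorder ι]
    [TopologicalSpace α] [LinearOrder α] [OrderClosedTopology α] [SecondCountableTopology α]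
    [MeasurableSpace α] [OpensMeasurableSpace α] : MeasurableSet {x : ι → α | StrictMono x} := by
  have : {x : ι → α | StrictMono x} = ⋂ i, ⋂ j, ⋂ (_ : i < j), {x | x i < x j} := by
    ext x
    simp [StrictMono]
  rw [this]
  exact .iInter fun i => .iInter fun j => .iInter fun _ =>
    measurableSet_lt (measurable_pi_apply i) (measurable_pi_apply j)

def orderedUnitTuples (n : ℕ) : Set (Fin n → ℝ) := {x | (∀ i, x i ∈ Icc 0 1) ∧ StrictMono x}

theorem measurableSet_orderedUnitTuples (n : ℕ) : MeasurableSet (orderedUnitTuples n) := by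
  convert (MeasurableSet.univ_pi fun _ => measurableSet_Icc (a := (0 : ℝ)) (b := 1)).inter
    (measurableSet_setOf_strictMono (ι := Fin n) (α := ℝ))
  ext x
  simp only [orderedUnitTuples, mem_inter_iff, mem_pi, mem_univ, forall_const, mem_ofPred_eq]

theorem volume_orderedUnitTuples_ne_zero (n : ℕ) : volume (orderedUnitTuples n) ≠ 0 := by
  have hn (i : Fin n) : (0 : ℝ) < n := Nat.cast_pos.mpr i.pos
  let B : Set (Fin n → ℝ) := univ.pi fun i => Ioo ((i : ℝ) / n) ((i + 1) / n)
  have hB : volume B ≠ 0 := by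
    rw [Real.volume_pi_Ioo, Finset.prod_ne_zero_iff]
    intro i _
    simpa using div_lt_div_of_pos_right (lt_add_one (i : ℝ)) (hn i)
  have hBsub : B ⊆ orderedUnitTuples n := by
    intro x hx
    simp only [B, mem_pi, mem_univ, mem_Ioo, forall_const] at hx
    refine ⟨fun i => ⟨(div_nonneg i.val.cast_nonneg (hn i).le).trans (hx i).1.le,
      (hx i).2.le.trans ?_⟩, fun i j hij => (hx i).2.trans_le (le_trans ?_ (hx j).1.le)⟩
    · rw [div_le_one (hn i)]
      exact_mod_cast i.isLt
    · gcongr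
      exact_mod_cast hij
  exact fun h => hB (measure_mono_null hBsub h)

theorem stmt_18 (m : ℕ)
    (Δ : Set (Fin (m + 1) → ℝ))
    (hΔ : Δ = {x | (∀ i, x i ∈ Set.Icc (0 : ℝ) 1) ∧ StrictMono x})
    (σ : (Fin (m + 1) → ℝ) → (Fin m → ℝ))
    (hmeas : Measurable (Δ.restrict σ))
    (hdel : ∀ x ∈ Δ, ∃ i : Fin (m + 1), σ x = x ∘ i.succAbove) :
    ∃ y : Fin m → ℝ, {x ∈ Δ | σ x = y}.Infinite := by
  have hΔmeas : MeasurableSet Δ := by rw [hΔ]; exact measurableSet_orderedUnitTuples (m + 1)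
  have hΔvol : volume Δ ≠ 0 := by rw [hΔ]; exact volume_orderedUnitTuples_ne_zero (m + 1)
  let A (i : Fin (m + 1)) := {x ∈ Δ | σ x = x ∘ i.succAbove}
  have hA (i : Fin (m + 1)) : MeasurableSet (A i) := hΔmeas.sep_eq_fun hmeas (by fun_prop)
  have hcover : Δ ⊆ ⋃ i, A i := fun x hx => mem_iUnion.2 ((hdel x hx).imp fun _ h => ⟨hx, h⟩)
  obtain ⟨i, hi⟩ : ∃ i, volume (A i) ≠ 0 := by
    by_contra! h
    exact hΔvol (measure_mono_null hcover (measure_iUnion_null h))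
  obtain ⟨y, hy⟩ := exists_infinite_fiber_comp_succAbove (hA i) hi i
  refine ⟨y, hy.mono ?_⟩
  rintro x ⟨⟨hxΔ, hxσ⟩, hxy⟩
  exact ⟨hxΔ, hxσ.trans hxy⟩
end
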